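/- arXiv:2402.17872 — 2 statements merged into one kernel-verified Lean document; each statement's English description precedes it below -/
import Mathlib

section
/- There exists a universal constant K > 0 with the following property: for every nonempty finite set X and every nontrivial upper set F ⊆ 2^X, one has q(F) ≤ p_c(F) ≤ K · q(F) · log₂ ℓ(F). -/
open Finset

noncomputable section

/-- Product measure weight of a single subset `S` of the finite type `X`. -/
def mu {X : Type*} [Fintype X] [DecidableEq X] (p : ℝ) (S : Finset X) : ℝ :=
  p ^ S.card * (1 - p) ^ (Fintype.card X - S.card)

/-- Measure of a family of subsets. -/
def muF {X : Type*} [Fintype X] [DecidableEq X] (p : ℝ) (F : Finset (Finset X)) : ℝ :=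
  ∑ S ∈ F, mu p S

/-- `F` is an upper set (increasing family) in `2^X`. -/
def IsUpperFam {X : Type*} [Fintype X] [DecidableEq X] (F : Finset (Finset X)) : Prop :=
  ∀ S ∈ F, ∀ T : Finset X, S ⊆ T → T ∈ F

/-- `G` is a cover of `F`: every member of `F` contains a member of `G`. -/
def IsCover {X : Type*} [Fintype X] [DecidableEq X] (G F : Finset (Finset X)) : Prop :=
  ∀ S ∈ F, ∃ T ∈ G, T ⊆ S

/-- `F` is `p`-small. -/
def PSmall {X : Type*} [Fintype X] [DecidableEq X] (p : ℝ) (F : Finset (Finset X)) : Prop :=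
  ∃ G : Finset (Finset X), IsCover G F ∧ ∑ T ∈ G, p ^ T.card ≤ 1 / 2

/-- Expectation threshold: the largest `p ∈ [0,1]` for which `F` is `p`-small. -/
def qThr {X : Type*} [Fintype X] [DecidableEq X] (F : Finset (Finset X)) : ℝ :=
  sSup {p : ℝ | p ∈ Set.Icc (0 : ℝ) 1 ∧ PSmall p F}

/-- The set of minimal elements of `F` (under inclusion). -/
def minimalsF {X : Type*} [Fintype X] [DecidableEq X] (F : Finset (Finset X)) :
    Finset (Finset X) :=
  F.filter fun S => ∀ T ∈ F, T ⊆ S → T = S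

/-- `ℓ₀(F)`: maximum size of a minimal element of `F`. -/
def ell0 {X : Type*} [Fintype X] [DecidableEq X] (F : Finset (Finset X)) : ℕ :=
  (minimalsF F).sup Finset.card

/-- `ℓ(F) = max (ℓ₀(F), 2)`. -/
def ell {X : Type*} [Fintype X] [DecidableEq X] (F : Finset (Finset X)) : ℕ :=
  max (ell0 F) 2

/-- The upper set generated by a family `A`. -/
def upClos {X : Type*} [Fintype X] [DecidableEq X] (A : Finset (Finset X)) :
    Finset (Finset X) :=
  Finset.univ.filter fun T => ∃ S ∈ A, S ⊆ T

/-- The ratio `r_{A,B}(p) = (μ_p(A)/μ_p(⟨A⟩)) / μ_p(B)`. -/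
def rAB {X : Type*} [Fintype X] [DecidableEq X] (A B : Finset (Finset X)) (p : ℝ) : ℝ :=
  (muF p A / muF p (upClos A)) / muF p B

end

set_option linter.unusedSectionVars false
noncomputable section PP
open scoped Classical
variable {X : Type*} [Fintype X] [DecidableEq X]

lemma pp_powerset_sum (A : Finset X) (x y : ℝ) :
    ∑ S ∈ A.powerset, x ^ S.card * y ^ (A.card - S.card) = (x + y) ^ A.card := by
  rw [← Finset.prod_const, Finset.prod_add]
  apply Finset.sum_congr rfl
  intro S hS
  rw [Finset.mem_powerset] at hS
  rw [Finset.prod_const, Finset.prod_const, Finset.card_sdiff_of_subset hS]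

lemma pp_mu_nonneg {p : ℝ} (hp0 : 0 ≤ p) (hp1 : p ≤ 1) (S : Finset X) : 0 ≤ mu p S := by
  unfold mu
  exact mul_nonneg (pow_nonneg hp0 _) (pow_nonneg (by linarith) _)

lemma pp_sum_mu (p : ℝ) : ∑ S : Finset X, mu p S = 1 := by
  have h := pp_powerset_sum (Finset.univ : Finset X) p (1 - p)
  simp only [add_sub_cancel, one_pow] at h
  rw [← h, ← Finset.powerset_univ]
  exact Finset.sum_congr rfl fun S _ => rfl

/-- key convolution identity, pointwise version -/
lemma pp_pair_union (a b : ℝ) (S : Finset X) :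
    ∑ z ∈ (Finset.univ ×ˢ Finset.univ).filter
        (fun z : Finset X × Finset X => z.1 ∪ z.2 = S), mu a z.1 * mu b z.2
      = mu (a + b - a * b) S := by
  have hstep : ∑ z ∈ (Finset.univ ×ˢ Finset.univ).filter
        (fun z : Finset X × Finset X => z.1 ∪ z.2 = S), mu a z.1 * mu b z.2
      = ∑ y ∈ S.powerset.sigma (fun W => W.powerset),
          mu a y.1 * mu b ((S \ y.1) ∪ y.2) := by
    apply Finset.sum_nbij' (fun z => ⟨z.1, z.2 ∩ z.1⟩)
      (fun y : Σ _ : Finset X, Finset X => (y.1, (S \ y.1) ∪ y.2))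
    · intro z hz
      rw [Finset.mem_filter] at hz
      rw [Finset.mem_sigma, Finset.mem_powerset, Finset.mem_powerset]
      exact ⟨hz.2 ▸ Finset.subset_union_left, Finset.inter_subset_right⟩
    · intro y hy
      rw [Finset.mem_sigma, Finset.mem_powerset, Finset.mem_powerset] at hy
      rw [Finset.mem_filter]
      refine ⟨Finset.mem_product.2 ⟨Finset.mem_univ _, Finset.mem_univ _⟩, ?_⟩
      rw [← Finset.union_assoc, Finset.union_sdiff_of_subset hy.1,
        Finset.union_eq_left.2 (hy.2.trans hy.1)]
    · intro z hz
      rw [Finset.mem_filter] at hz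
      have h1 : S \ z.1 = z.2 \ z.1 := by rw [← hz.2, Finset.union_sdiff_left]
      simp only [h1, Finset.sdiff_union_inter]
    · intro y hy
      rw [Finset.mem_sigma, Finset.mem_powerset, Finset.mem_powerset] at hy
      have : ((S \ y.1) ∪ y.2) ∩ y.1 = y.2 := by
        rw [Finset.union_inter_distrib_right, Finset.sdiff_inter_self,
          Finset.inter_eq_left.2 hy.2, Finset.empty_union]
      simp only [this]
    · intro z hz
      rw [Finset.mem_filter] at hz
      have h1 : S \ z.1 = z.2 \ z.1 := by rw [← hz.2, Finset.union_sdiff_left]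
      rw [h1, Finset.sdiff_union_inter]
  rw [hstep, Finset.sum_sigma]
  have hinner : ∀ W ∈ S.powerset,
      ∑ D ∈ W.powerset, mu a W * mu b ((S \ W) ∪ D)
        = mu a W * (b ^ (S.card - W.card) * (1 - b) ^ (Fintype.card X - S.card)) := by
    intro W hW
    rw [Finset.mem_powerset] at hW
    have hsub : ∀ D ∈ W.powerset, mu a W * mu b ((S \ W) ∪ D)
        = (mu a W * (b ^ (S.card - W.card) * (1 - b) ^ (Fintype.card X - S.card)))
          * (b ^ D.card * (1 - b) ^ (W.card - D.card)) := by
      intro D hD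
      rw [Finset.mem_powerset] at hD
      have hdisj : Disjoint (S \ W) D :=
        Finset.disjoint_left.2 fun x hx hxD => (Finset.mem_sdiff.1 hx).2 (hD hxD)
      have hcard : ((S \ W) ∪ D).card = (S.card - W.card) + D.card := by
        rw [Finset.card_union_of_disjoint hdisj, Finset.card_sdiff_of_subset hW]
      have hw : W.card ≤ S.card := Finset.card_le_card hW
      have hs : S.card ≤ Fintype.card X := Finset.card_le_card (Finset.subset_univ S)
      have hd : D.card ≤ W.card := Finset.card_le_card hD
      have he : Fintype.card X - ((S.card - W.card) + D.card)
          = (Fintype.card X - S.card) + (W.card - D.card) := by omega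
      unfold mu
      rw [hcard, he, pow_add, pow_add]
      ring
    rw [Finset.sum_congr rfl hsub, ← Finset.mul_sum, pp_powerset_sum, add_sub_cancel, one_pow,
      mul_one]
  rw [Finset.sum_congr rfl hinner]
  have houter : ∀ W ∈ S.powerset,
      mu a W * (b ^ (S.card - W.card) * (1 - b) ^ (Fintype.card X - S.card))
        = (((1 - a) * (1 - b)) ^ (Fintype.card X - S.card))
          * (a ^ W.card * ((1 - a) * b) ^ (S.card - W.card)) := by
    intro W hW
    rw [Finset.mem_powerset] at hW
    have hw : W.card ≤ S.card := Finset.card_le_card hW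
    have hs : S.card ≤ Fintype.card X := Finset.card_le_card (Finset.subset_univ S)
    have he : Fintype.card X - W.card = (Fintype.card X - S.card) + (S.card - W.card) := by omega
    unfold mu
    rw [he, pow_add, mul_pow, mul_pow]
    ring
  rw [Finset.sum_congr rfl houter, ← Finset.mul_sum, pp_powerset_sum]
  unfold mu
  have h1 : a + (1 - a) * b = a + b - a * b := by ring
  have h2 : (1 - a) * (1 - b) = 1 - (a + b - a * b) := by ring
  rw [h1, h2]
  ring

/-- convolution identity for families -/
lemma pp_union_convolution (a b : ℝ) (A : Finset (Finset X)) :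
    ∑ z ∈ (Finset.univ ×ˢ Finset.univ : Finset (Finset X × Finset X)),
        mu a z.1 * mu b z.2 * (if z.1 ∪ z.2 ∈ A then (1:ℝ) else 0)
      = muF (a + b - a * b) A := by
  rw [← Finset.sum_fiberwise_of_maps_to (g := fun z : Finset X × Finset X => z.1 ∪ z.2)
      (t := Finset.univ) (fun z _ => Finset.mem_univ _)]
  have h1 : ∀ S ∈ (Finset.univ : Finset (Finset X)),
      ∑ z ∈ (Finset.univ ×ˢ Finset.univ).filter
          (fun z : Finset X × Finset X => z.1 ∪ z.2 = S),
          mu a z.1 * mu b z.2 * (if z.1 ∪ z.2 ∈ A then (1:ℝ) else 0)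
        = (if S ∈ A then (1:ℝ) else 0) * mu (a + b - a * b) S := by
    intro S _
    rw [← pp_pair_union a b S, Finset.mul_sum]
    apply Finset.sum_congr rfl
    intro z hz
    rw [Finset.mem_filter] at hz
    rw [hz.2]
    ring
  rw [Finset.sum_congr rfl h1]
  unfold muF
  simp only [ite_mul, one_mul, zero_mul]
  rw [Finset.sum_ite_mem, Finset.univ_inter]

lemma pp_muF_le_of_upper {F : Finset (Finset X)} (hF : IsUpperFam F) {a p : ℝ}
    (ha : 0 ≤ a) (hap : a ≤ p) (hp : p ≤ 1) : muF a F ≤ muF p F := by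
  rcases eq_or_lt_of_le hap with h | h
  · rw [h]
  · set b := (p - a) / (1 - a) with hb
    have ha1 : a < 1 := lt_of_lt_of_le h hp
    have h1a : 0 < 1 - a := by linarith
    have hb0 : 0 < b := div_pos (by linarith) h1a
    have hb1 : b ≤ 1 := by
      rw [hb, div_le_one h1a]; linarith
    have hab : a + b - a * b = p := by
      have : a + b - a * b = a + b * (1 - a) := by ring
      rw [this, hb, div_mul_cancel₀ _ (ne_of_gt h1a)]
      ring
    rw [← hab, ← pp_union_convolution a b F]
    have hge : ∀ z ∈ (Finset.univ ×ˢ Finset.univ : Finset (Finset X × Finset X)),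
        mu a z.1 * mu b z.2 * (if z.1 ∈ F then (1:ℝ) else 0)
          ≤ mu a z.1 * mu b z.2 * (if z.1 ∪ z.2 ∈ F then (1:ℝ) else 0) := by
      intro z _
      by_cases hz : z.1 ∈ F
      · rw [if_pos hz, if_pos (hF z.1 hz _ Finset.subset_union_left)]
      · rw [if_neg hz, mul_zero]
        have := mul_nonneg (pp_mu_nonneg ha (by linarith) z.1)
          (pp_mu_nonneg (le_of_lt hb0) hb1 z.2)
        positivity
    refine le_trans (le_of_eq ?_) (Finset.sum_le_sum hge)
    rw [Finset.sum_product]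
    have : ∀ W : Finset X, ∑ A' : Finset X,
        mu a W * mu b A' * (if W ∈ F then (1:ℝ) else 0)
          = mu a W * (if W ∈ F then (1:ℝ) else 0) := by
      intro W
      rw [← Finset.sum_mul, ← Finset.mul_sum, pp_sum_mu, mul_one]
    rw [Finset.sum_congr rfl fun W _ => this W]
    unfold muF
    simp only [mul_ite, mul_one, mul_zero]
    rw [Finset.sum_ite_mem, Finset.univ_inter]

lemma pp_muF_lt_of_upper {F : Finset (Finset X)} (hF : IsUpperFam F)
    (hne : (∅ : Finset X) ∉ F) (huniv : (Finset.univ : Finset X) ∈ F) {a p : ℝ}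
    (ha : 0 ≤ a) (hap : a < p) (hp : p ≤ 1) : muF a F < muF p F := by
  set b := (p - a) / (1 - a) with hb
  have ha1 : a < 1 := lt_of_lt_of_le hap hp
  have h1a : 0 < 1 - a := by linarith
  have hb0 : 0 < b := div_pos (by linarith) h1a
  have hb1 : b ≤ 1 := by rw [hb, div_le_one h1a]; linarith
  have hab : a + b - a * b = p := by
    have : a + b - a * b = a + b * (1 - a) := by ring
    rw [this, hb, div_mul_cancel₀ _ (ne_of_gt h1a)]
    ring
  rw [← hab, ← pp_union_convolution a b F]
  have hmuFa : muF a F = ∑ z ∈ (Finset.univ ×ˢ Finset.univ : Finset (Finset X × Finset X)),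
      mu a z.1 * mu b z.2 * (if z.1 ∈ F then (1:ℝ) else 0) := by
    rw [Finset.sum_product]
    have : ∀ W : Finset X, ∑ A' : Finset X,
        mu a W * mu b A' * (if W ∈ F then (1:ℝ) else 0)
          = mu a W * (if W ∈ F then (1:ℝ) else 0) := by
      intro W
      rw [← Finset.sum_mul, ← Finset.mul_sum, pp_sum_mu, mul_one]
    rw [Finset.sum_congr rfl fun W _ => this W]
    unfold muF
    simp only [mul_ite, mul_one, mul_zero]
    rw [Finset.sum_ite_mem, Finset.univ_inter]
  rw [hmuFa]
  apply Finset.sum_lt_sum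
  · intro z _
    by_cases hz : z.1 ∈ F
    · rw [if_pos hz, if_pos (hF z.1 hz _ Finset.subset_union_left)]
    · rw [if_neg hz, mul_zero]
      have h1 := pp_mu_nonneg ha (by linarith) z.1
      have h2 := pp_mu_nonneg (le_of_lt hb0) hb1 z.2
      positivity
  · refine ⟨((∅ : Finset X), (Finset.univ : Finset X)),
      Finset.mem_product.2 ⟨Finset.mem_univ _, Finset.mem_univ _⟩, ?_⟩
    simp only [if_neg hne, mul_zero, Finset.empty_union, if_pos huniv, mul_one]
    have h1 : mu a (∅ : Finset X) = (1 - a) ^ (Fintype.card X) := by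
      unfold mu; simp
    have h2 : mu b (Finset.univ : Finset X) = b ^ (Fintype.card X) := by
      unfold mu
      simp [Finset.card_univ]
    rw [h1, h2]
    positivity

/-- sum over a biUnion is at most the double sum, for nonneg weights -/
lemma pp_sum_biUnion_le {H : Finset (Finset X)} {u : Finset X → Finset (Finset X)}
    {f : Finset X → ℝ} (hf : ∀ S, 0 ≤ f S) :
    ∑ S ∈ H.biUnion u, f S ≤ ∑ T ∈ H, ∑ S ∈ u T, f S := by
  induction H using Finset.induction_on with
  | empty => simp
  | insert _ _ hx ih =>
    rename_i T H'
    rw [Finset.biUnion_insert, Finset.sum_insert hx]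
    calc ∑ S ∈ u T ∪ H'.biUnion u, f S
        ≤ ∑ S ∈ u T, f S + ∑ S ∈ H'.biUnion u, f S := by
          have := Finset.sum_union_inter (s₁ := u T) (s₂ := H'.biUnion u) (f := f)
          have hnn : 0 ≤ ∑ S ∈ u T ∩ H'.biUnion u, f S :=
            Finset.sum_nonneg fun S _ => hf S
          linarith
      _ ≤ ∑ S ∈ u T, f S + ∑ T' ∈ H', ∑ S ∈ u T', f S := by linarith [ih]

/-- measure of the up-set generated by T -/
lemma pp_mu_upset (p : ℝ) (T : Finset X) :
    ∑ S ∈ Finset.univ.filter (fun S => T ⊆ S), mu p S = p ^ T.card := by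
  have hb : ∑ S ∈ Finset.univ.filter (fun S => T ⊆ S), mu p S
      = ∑ D ∈ (Finset.univ \ T).powerset, mu p (T ∪ D) := by
    apply Finset.sum_nbij' (fun S => S \ T) (fun D => T ∪ D)
    · intro S hS
      rw [Finset.mem_filter] at hS
      rw [Finset.mem_powerset]
      exact Finset.sdiff_subset_sdiff (Finset.subset_univ S) (le_refl T)
    · intro D hD
      rw [Finset.mem_powerset] at hD
      rw [Finset.mem_filter]
      exact ⟨Finset.mem_univ _, Finset.subset_union_left⟩
    · intro S hS
      rw [Finset.mem_filter] at hS
      rw [Finset.union_sdiff_self_eq_union, Finset.union_eq_right.2 hS.2]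
    · intro D hD
      rw [Finset.mem_powerset] at hD
      rw [Finset.union_sdiff_cancel_left]
      exact Finset.disjoint_left.2 fun a ha hD' => (Finset.mem_sdiff.1 (hD hD')).2 ha
    · intro S hS
      rw [Finset.mem_filter] at hS
      rw [Finset.union_sdiff_of_subset hS.2]
  rw [hb]
  have hc : ∀ D ∈ (Finset.univ \ T).powerset, mu p (T ∪ D)
      = p ^ T.card * (p ^ D.card * (1 - p) ^ ((Finset.univ \ T : Finset X).card - D.card)) := by
    intro D hD
    rw [Finset.mem_powerset] at hD
    have hdisj : Disjoint T D := Finset.disjoint_left.2 fun a ha hD' =>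
      (Finset.mem_sdiff.1 (hD hD')).2 ha
    have hcard : (T ∪ D).card = T.card + D.card := Finset.card_union_of_disjoint hdisj
    have hTle : T.card ≤ Fintype.card X := Finset.card_le_card (Finset.subset_univ T)
    have hDle : D.card ≤ (Finset.univ \ T : Finset X).card := Finset.card_le_card hD
    have huT : (Finset.univ \ T : Finset X).card = Fintype.card X - T.card := by
      rw [Finset.card_sdiff_of_subset (Finset.subset_univ T)]
      rfl
    unfold mu
    rw [hcard, pow_add, huT]
    have : Fintype.card X - (T.card + D.card) = Fintype.card X - T.card - D.card := by omega
    rw [this]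
    ring
  rw [Finset.sum_congr rfl hc, ← Finset.mul_sum, pp_powerset_sum, add_sub_cancel, one_pow,
    mul_one]

/-- union-bound / cover cost bound -/
lemma pp_cover_bound {p : ℝ} (hp0 : 0 ≤ p) (hp1 : p ≤ 1) {F H : Finset (Finset X)}
    (hcov : IsCover H F) : muF p F ≤ ∑ T ∈ H, p ^ T.card := by
  have hsub : F ⊆ H.biUnion (fun T => Finset.univ.filter (fun S => T ⊆ S)) := by
    intro S hS
    obtain ⟨T, hT, hTS⟩ := hcov S hS
    exact Finset.mem_biUnion.2 ⟨T, hT, Finset.mem_filter.2 ⟨Finset.mem_univ _, hTS⟩⟩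
  calc muF p F ≤ ∑ S ∈ H.biUnion (fun T => Finset.univ.filter (fun S => T ⊆ S)), mu p S :=
        Finset.sum_le_sum_of_subset_of_nonneg hsub fun S _ _ => pp_mu_nonneg hp0 hp1 S
    _ ≤ ∑ T ∈ H, ∑ S ∈ Finset.univ.filter (fun S => T ⊆ S), mu p S :=
        pp_sum_biUnion_le fun S => pp_mu_nonneg hp0 hp1 S
    _ = ∑ T ∈ H, p ^ T.card := Finset.sum_congr rfl fun T _ => pp_mu_upset p T

/-! ### The fragment process -/

/-- fragments of `(S, W)` relative to the family `G` -/
def Frag (G : Finset (Finset X)) (S W : Finset X) : Finset (Finset X) :=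
  (G.filter (fun S' => S' ⊆ S ∪ W)).image (fun S' => S' \ W)

/-- minimum fragment cardinality -/
def mfc (G : Finset (Finset X)) (S W : Finset X) : ℕ :=
  sInf {n | ∃ T ∈ Frag G S W, T.card = n}

/-- the set of minimum fragments -/
def MF (G : Finset (Finset X)) (S W : Finset X) : Finset (Finset X) :=
  (Frag G S W).filter (fun T => T.card = mfc G S W)

/-- the small minimum fragments (continue to the next round) -/
def GoodF (κ : ℝ) (G : Finset (Finset X)) (W : Finset X) : Finset (Finset X) :=
  G.biUnion (fun S => if ((mfc G S W : ℝ) ≤ κ / 2) then MF G S W else ∅)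

/-- the large minimum fragments (get covered directly) -/
def BadF (κ : ℝ) (G : Finset (Finset X)) (W : Finset X) : Finset (Finset X) :=
  G.biUnion (fun S => if ((mfc G S W : ℝ) ≤ κ / 2) then ∅ else MF G S W)

/-- cost of a family -/
def costW (p : ℝ) (H : Finset (Finset X)) : ℝ := ∑ T ∈ H, p ^ T.card

def SizeLE (κ : ℝ) (G : Finset (Finset X)) : Prop := ∀ S ∈ G, (S.card : ℝ) ≤ κ

lemma pp_frag_self {G : Finset (Finset X)} {S : Finset X} (hS : S ∈ G) (W : Finset X) :
    S \ W ∈ Frag G S W :=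
  Finset.mem_image.2 ⟨S, Finset.mem_filter.2 ⟨hS, Finset.subset_union_left⟩, rfl⟩

lemma pp_mfc_exists {G : Finset (Finset X)} {S : Finset X} (hS : S ∈ G) (W : Finset X) :
    ∃ T ∈ Frag G S W, T.card = mfc G S W := by
  have hne : {n | ∃ T ∈ Frag G S W, T.card = n}.Nonempty :=
    ⟨(S \ W).card, S \ W, pp_frag_self hS W, rfl⟩
  exact Nat.sInf_mem hne

lemma pp_mfc_le {G : Finset (Finset X)} {S W T : Finset X} (hT : T ∈ Frag G S W) :
    mfc G S W ≤ T.card :=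
  Nat.sInf_le ⟨T, hT, rfl⟩

lemma pp_MF_nonempty {G : Finset (Finset X)} {S : Finset X} (hS : S ∈ G) (W : Finset X) :
    (MF G S W).Nonempty := by
  obtain ⟨T, hT, hc⟩ := pp_mfc_exists hS W
  exact ⟨T, Finset.mem_filter.2 ⟨hT, hc⟩⟩

lemma pp_frag_sub {G : Finset (Finset X)} {S W T : Finset X} (hT : T ∈ Frag G S W) :
    T ⊆ S ∧ Disjoint T W ∧ ∃ S' ∈ G, T = S' \ W := by
  obtain ⟨S', hS', hTS'⟩ := Finset.mem_image.1 hT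
  rw [Finset.mem_filter] at hS'
  subst hTS'
  refine ⟨?_, Finset.sdiff_disjoint, S', hS'.1, rfl⟩
  intro x hx
  rw [Finset.mem_sdiff] at hx
  rcases Finset.mem_union.1 (hS'.2 hx.1) with h | h
  · exact h
  · exact absurd h hx.2

lemma pp_MF_sub {G : Finset (Finset X)} {S W T : Finset X} (hT : T ∈ MF G S W) :
    T ⊆ S ∧ Disjoint T W ∧ T.card = mfc G S W ∧ ∃ S' ∈ G, T = S' \ W := by
  rw [MF, Finset.mem_filter] at hT
  obtain ⟨h1, h2, h3⟩ := pp_frag_sub hT.1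
  exact ⟨h1, h2, hT.2, h3⟩

lemma pp_mem_GoodF {κ : ℝ} {G : Finset (Finset X)} {W T : Finset X}
    (hT : T ∈ GoodF κ G W) :
    (T.card : ℝ) ≤ κ / 2 ∧ ∃ S' ∈ G, T = S' \ W := by
  obtain ⟨S, hS, hmem⟩ := Finset.mem_biUnion.1 hT
  by_cases hc : ((mfc G S W : ℝ) ≤ κ / 2)
  · rw [if_pos hc] at hmem
    obtain ⟨-, -, hcard, hex⟩ := pp_MF_sub hmem
    rw [hcard]
    exact ⟨hc, hex⟩
  · rw [if_neg hc] at hmem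
    exact absurd hmem (Finset.notMem_empty T)

lemma pp_GoodF_sizes (κ : ℝ) (G : Finset (Finset X)) (W : Finset X) :
    SizeLE (κ / 2) (GoodF κ G W) := fun T hT => (pp_mem_GoodF hT).1

lemma pp_mem_BadF {κ : ℝ} {G : Finset (Finset X)} {W T : Finset X}
    (hT : T ∈ BadF κ G W) :
    κ / 2 < (T.card : ℝ) ∧ Disjoint T W ∧
      ∃ S ∈ G, T ∈ MF G S W := by
  obtain ⟨S, hS, hmem⟩ := Finset.mem_biUnion.1 hT
  by_cases hc : ((mfc G S W : ℝ) ≤ κ / 2)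
  · rw [if_pos hc] at hmem
    exact absurd hmem (Finset.notMem_empty T)
  · rw [if_neg hc] at hmem
    obtain ⟨-, hdisj, hcard, -⟩ := pp_MF_sub hmem
    rw [hcard]
    exact ⟨lt_of_not_ge hc, hdisj, S, hS, hmem⟩

lemma pp_empty_mem_GoodF {κ : ℝ} (hκ : 0 ≤ κ) {G : Finset (Finset X)}
    (hG : (∅ : Finset X) ∈ G) (W : Finset X) : (∅ : Finset X) ∈ GoodF κ G W := by
  have hfrag : (∅ : Finset X) ∈ Frag G ∅ W := by
    have := pp_frag_self hG W
    rwa [Finset.empty_sdiff] at this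
  have hmfc : mfc G ∅ W = 0 := Nat.le_zero.1 (by simpa using pp_mfc_le hfrag)
  apply Finset.mem_biUnion.2 ⟨∅, hG, ?_⟩
  rw [if_pos (by rw [hmfc]; simpa using by linarith : ((mfc G ∅ W : ℝ) ≤ κ / 2))]
  exact Finset.mem_filter.2 ⟨hfrag, by rw [hmfc, Finset.card_empty]⟩

/-- dichotomy: every `S ∈ G` contains a minimum fragment, which is good or bad -/
lemma pp_dichotomy (κ : ℝ) {G : Finset (Finset X)} {S : Finset X} (hS : S ∈ G)
    (W : Finset X) :
    ∃ T, T ⊆ S ∧ (T ∈ GoodF κ G W ∨ T ∈ BadF κ G W) := by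
  obtain ⟨T, hT⟩ := pp_MF_nonempty hS W
  refine ⟨T, (pp_MF_sub hT).1, ?_⟩
  by_cases hc : ((mfc G S W : ℝ) ≤ κ / 2)
  · exact Or.inl (Finset.mem_biUnion.2 ⟨S, hS, by rw [if_pos hc]; exact hT⟩)
  · exact Or.inr (Finset.mem_biUnion.2 ⟨S, hS, by rw [if_neg hc]; exact hT⟩)

/-! ### minimum cover cost -/

lemma pp_covers_nonempty (G : Finset (Finset X)) :
    ((Finset.univ.filter (fun H : Finset (Finset X) => IsCover H G)).image (costW p)).Nonempty := by
  refine ⟨costW p {(∅ : Finset X)}, Finset.mem_image.2 ⟨{(∅ : Finset X)}, ?_, rfl⟩⟩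
  refine Finset.mem_filter.2 ⟨Finset.mem_univ _, fun S _ => ?_⟩
  exact ⟨∅, Finset.mem_singleton_self _, Finset.empty_subset S⟩

def minCost (p : ℝ) (G : Finset (Finset X)) : ℝ :=
  ((Finset.univ.filter (fun H : Finset (Finset X) => IsCover H G)).image (costW p)).min'
    (pp_covers_nonempty G)

lemma pp_minCost_le {p : ℝ} {G H : Finset (Finset X)} (hH : IsCover H G) :
    minCost p G ≤ costW p H := by
  unfold minCost
  apply Finset.min'_le
  exact Finset.mem_image.2 ⟨H, Finset.mem_filter.2 ⟨Finset.mem_univ _, hH⟩, rfl⟩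

lemma pp_minCost_attained (p : ℝ) (G : Finset (Finset X)) :
    ∃ H, IsCover H G ∧ costW p H = minCost p G := by
  have h := Finset.min'_mem _ (pp_covers_nonempty (p := p) G)
  rw [Finset.mem_image] at h
  obtain ⟨H, hH, hcost⟩ := h
  exact ⟨H, (Finset.mem_filter.1 hH).2, hcost⟩

lemma pp_costW_nonneg {p : ℝ} (hp : 0 ≤ p) (H : Finset (Finset X)) : 0 ≤ costW p H :=
  Finset.sum_nonneg fun T _ => pow_nonneg hp _

lemma pp_minCost_nonneg {p : ℝ} (hp : 0 ≤ p) (G : Finset (Finset X)) : 0 ≤ minCost p G := by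
  obtain ⟨H, -, hcost⟩ := pp_minCost_attained p G
  rw [← hcost]
  exact pp_costW_nonneg hp H

lemma pp_costW_union_le {p : ℝ} (hp : 0 ≤ p) (A B : Finset (Finset X)) :
    costW p (A ∪ B) ≤ costW p A + costW p B := by
  have h := Finset.sum_union_inter (s₁ := A) (s₂ := B) (f := fun T : Finset X => p ^ T.card)
  have hnn : 0 ≤ ∑ T ∈ A ∩ B, p ^ T.card := Finset.sum_nonneg fun T _ => pow_nonneg hp _
  unfold costW
  linarith

/-- one-round cover decomposition -/
lemma pp_minCost_step {p : ℝ} (hp : 0 ≤ p) (κ : ℝ) (G : Finset (Finset X)) (W : Finset X) :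
    minCost p G ≤ costW p (BadF κ G W) + minCost p (GoodF κ G W) := by
  obtain ⟨H', hH', hcost⟩ := pp_minCost_attained p (GoodF κ G W)
  have hcover : IsCover (BadF κ G W ∪ H') G := by
    intro S hS
    obtain ⟨T, hTS, hT | hT⟩ := pp_dichotomy κ hS W
    · obtain ⟨T', hT', hT'T⟩ := hH' T hT
      exact ⟨T', Finset.mem_union_right _ hT', hT'T.trans hTS⟩
    · exact ⟨T, Finset.mem_union_left _ hT, hTS⟩
  calc minCost p G ≤ costW p (BadF κ G W ∪ H') := pp_minCost_le hcover
    _ ≤ costW p (BadF κ G W) + costW p H' := pp_costW_union_le hp _ _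
    _ = costW p (BadF κ G W) + minCost p (GoodF κ G W) := by rw [hcost]

/-! ### the key counting claim -/

lemma pp_keyclaim {κ : ℝ} {G : Finset (Finset X)} {Z T : Finset X}
    (hTZ : T ⊆ Z) (hT : T ∈ BadF κ G (Z \ T)) :
    (∃ S₁ ∈ G, S₁ ⊆ Z) ∧ (∀ S'' ∈ G, S'' ⊆ Z → T ⊆ S'') ∧ κ / 2 < (T.card : ℝ) := by
  set W := Z \ T with hW
  obtain ⟨hbig, hdisj, S, hSG, hMF⟩ := pp_mem_BadF hT
  obtain ⟨hTsubS, -, hcard, S', hS'G, hTS'⟩ := pp_MF_sub hMF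
  have hTW : T ∪ W = Z := by
    rw [hW]
    exact Finset.union_sdiff_of_subset hTZ
  have hS'Z : S' ⊆ Z := by
    rw [← hTW]
    intro x hx
    rcases Classical.em (x ∈ W) with h | h
    · exact Finset.mem_union_right _ h
    · exact Finset.mem_union_left _ (hTS' ▸ Finset.mem_sdiff.2 ⟨hx, h⟩)
  have hforall : ∀ S'' ∈ G, S'' ⊆ Z → T ⊆ S'' := by
    intro S'' hS''G hS''Z
    have hS''SW : S'' ⊆ S ∪ W := by
      intro x hx
      rcases Finset.mem_union.1 (hTW ▸ hS''Z hx) with h | h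
      · exact Finset.mem_union_left _ (hTsubS h)
      · exact Finset.mem_union_right _ h
    have hfrag : S'' \ W ∈ Frag G S W :=
      Finset.mem_image.2 ⟨S'', Finset.mem_filter.2 ⟨hS''G, hS''SW⟩, rfl⟩
    have hge : T.card ≤ (S'' \ W).card := hcard ▸ pp_mfc_le hfrag
    have hsub : S'' \ W ⊆ T := by
      intro x hx
      rw [Finset.mem_sdiff] at hx
      have hxZ : x ∈ Z := hS''Z hx.1
      rw [← hTW] at hxZ
      rcases Finset.mem_union.1 hxZ with h | h
      · exact h
      · exact absurd h hx.2
    have := Finset.eq_of_subset_of_card_le hsub hge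
    rw [← this]
    exact Finset.sdiff_subset
  exact ⟨⟨S', hS'G, hS'Z⟩, hforall, hbig⟩

/-! ### the one-round expected bad cost bound -/

lemma pp_weight_shift {p q : ℝ} (hp : 0 < p) (hq : q = 4096 * p) (hq1 : q ≤ 1)
    {T Z : Finset X} (hTZ : T ⊆ Z) :
    mu q (Z \ T) * p ^ T.card ≤ mu q Z * (1 / 4096 : ℝ) ^ T.card := by
  have hq0 : 0 < q := by rw [hq]; linarith
  have ht : T.card ≤ Z.card := Finset.card_le_card hTZ
  have hz : Z.card ≤ Fintype.card X := Finset.card_le_card (Finset.subset_univ Z)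
  have hcard : (Z \ T).card = Z.card - T.card := Finset.card_sdiff_of_subset hTZ
  have he : Fintype.card X - (Z.card - T.card) = (Fintype.card X - Z.card) + T.card := by omega
  have hzz : Z.card = (Z.card - T.card) + T.card := by omega
  unfold mu
  rw [hcard, he, pow_add]
  calc q ^ (Z.card - T.card) * ((1 - q) ^ (Fintype.card X - Z.card) * (1 - q) ^ T.card)
        * p ^ T.card
      = (q ^ (Z.card - T.card) * (1 - q) ^ (Fintype.card X - Z.card) * p ^ T.card)
        * (1 - q) ^ T.card := by ring
    _ ≤ q ^ (Z.card - T.card) * (1 - q) ^ (Fintype.card X - Z.card) * p ^ T.card := by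
        apply mul_le_of_le_one_right
        · have h1 : (0:ℝ) ≤ 1 - q := by linarith
          have h2 : (0:ℝ) ≤ q := le_of_lt hq0
          positivity
        · exact pow_le_one₀ (by linarith) (by linarith)
    _ = q ^ Z.card * (1 - q) ^ (Fintype.card X - Z.card) * (1 / 4096 : ℝ) ^ T.card := by
        have hpq : p = q * (1 / 4096 : ℝ) := by rw [hq]; ring
        have h3 : q ^ (Z.card - T.card) * p ^ T.card
            = q ^ Z.card * (1 / 4096 : ℝ) ^ T.card := by
          rw [hpq, mul_pow, ← mul_assoc, ← pow_add,
            show Z.card - T.card + T.card = Z.card from by omega]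
        calc q ^ (Z.card - T.card) * (1 - q) ^ (Fintype.card X - Z.card) * p ^ T.card
            = (q ^ (Z.card - T.card) * p ^ T.card) * (1 - q) ^ (Fintype.card X - Z.card) := by
              ring
          _ = (q ^ Z.card * (1 / 4096 : ℝ) ^ T.card) * (1 - q) ^ (Fintype.card X - Z.card) := by
              rw [h3]
          _ = q ^ Z.card * (1 - q) ^ (Fintype.card X - Z.card) * (1 / 4096 : ℝ) ^ T.card := by
              ring

lemma pp_inner_bound {κ : ℝ} (hκ : 0 ≤ κ) {G : Finset (Finset X)} (hG : SizeLE κ G)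
    (Z : Finset X) :
    ∑ T ∈ Finset.univ.filter (fun T => T ⊆ Z ∧ T ∈ BadF κ G (Z \ T)),
        (1 / 4096 : ℝ) ^ T.card
      ≤ (1 / 1024 : ℝ) ^ (κ / 2 : ℝ) := by
  set s := Finset.univ.filter (fun T => T ⊆ Z ∧ T ∈ BadF κ G (Z \ T)) with hs
  rcases Finset.eq_empty_or_nonempty s with hse | ⟨T₁, hT₁⟩
  · rw [hse, Finset.sum_empty]
    positivity
  · have hT₁' := Finset.mem_filter.1 hT₁
    obtain ⟨⟨S₁, hS₁G, hS₁Z⟩, -, -⟩ := pp_keyclaim hT₁'.2.1 hT₁'.2.2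
    have hsub : s ⊆ S₁.powerset := by
      intro T hT
      have hT' := Finset.mem_filter.1 hT
      obtain ⟨-, hall, -⟩ := pp_keyclaim hT'.2.1 hT'.2.2
      exact Finset.mem_powerset.2 (hall S₁ hS₁G hS₁Z)
    have hterm : ∀ T ∈ s, (1 / 4096 : ℝ) ^ T.card ≤ (1 / 4096 : ℝ) ^ (κ / 2 : ℝ) := by
      intro T hT
      have hT' := Finset.mem_filter.1 hT
      obtain ⟨-, -, hbig⟩ := pp_keyclaim hT'.2.1 hT'.2.2
      rw [← Real.rpow_natCast (1 / 4096 : ℝ) T.card]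
      exact Real.rpow_le_rpow_of_exponent_ge (by norm_num) (by norm_num) (le_of_lt hbig)
    calc ∑ T ∈ s, (1 / 4096 : ℝ) ^ T.card
        ≤ ∑ _T ∈ s, (1 / 4096 : ℝ) ^ (κ / 2 : ℝ) := Finset.sum_le_sum hterm
      _ = (s.card : ℝ) * (1 / 4096 : ℝ) ^ (κ / 2 : ℝ) := by
          rw [Finset.sum_const, nsmul_eq_mul]
      _ ≤ (2 : ℝ) ^ (κ : ℝ) * (1 / 4096 : ℝ) ^ (κ / 2 : ℝ) := by
          apply mul_le_mul_of_nonneg_right _ (by positivity)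
          have h1 : s.card ≤ 2 ^ S₁.card := by
            calc s.card ≤ S₁.powerset.card := Finset.card_le_card hsub
              _ = 2 ^ S₁.card := Finset.card_powerset S₁
          calc (s.card : ℝ) ≤ ((2:ℕ) ^ S₁.card : ℕ) := by exact_mod_cast h1
            _ = (2 : ℝ) ^ (S₁.card : ℝ) := by
                rw [Real.rpow_natCast]
                norm_num
            _ ≤ (2 : ℝ) ^ (κ : ℝ) :=
                Real.rpow_le_rpow_of_exponent_le (by norm_num) (hG S₁ hS₁G)
      _ = (1 / 1024 : ℝ) ^ (κ / 2 : ℝ) := by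
          have h2 : (2 : ℝ) ^ (κ : ℝ) = (4 : ℝ) ^ (κ / 2 : ℝ) := by
            rw [show (4:ℝ) = (2:ℝ) ^ (2:ℝ) by
              rw [show ((2:ℝ):ℝ) = ((2:ℕ):ℝ) by norm_num, Real.rpow_natCast]; norm_num]
            rw [← Real.rpow_mul (by norm_num : (0:ℝ) ≤ 2)]
            ring_nf
          rw [h2, ← Real.mul_rpow (by norm_num) (by norm_num)]
          norm_num

/-- the one-round expectation bound for the bad cover cost -/
lemma pp_round_bound {p q κ : ℝ} (hp : 0 < p) (hq : q = 4096 * p) (hq1 : q ≤ 1)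
    (hκ : 0 ≤ κ) {G : Finset (Finset X)} (hG : SizeLE κ G) :
    ∑ W : Finset X, mu q W * costW p (BadF κ G W) ≤ (1 / 1024 : ℝ) ^ (κ / 2 : ℝ) := by
  have hq0 : 0 < q := by rw [hq]; linarith
  have step1 : ∑ W : Finset X, mu q W * costW p (BadF κ G W)
      = ∑ z ∈ (Finset.univ : Finset (Finset X)).sigma (fun W => BadF κ G W),
          mu q z.1 * p ^ z.2.card := by
    rw [Finset.sum_sigma]
    apply Finset.sum_congr rfl
    intro W _
    rw [costW, Finset.mul_sum]
  have step2 : ∑ z ∈ (Finset.univ : Finset (Finset X)).sigma (fun W => BadF κ G W),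
          mu q z.1 * p ^ z.2.card
      = ∑ y ∈ (Finset.univ : Finset (Finset X)).sigma
          (fun Z => Finset.univ.filter (fun T => T ⊆ Z ∧ T ∈ BadF κ G (Z \ T))),
          mu q (y.1 \ y.2) * p ^ y.2.card := by
    apply Finset.sum_nbij' (fun z => ⟨z.1 ∪ z.2, z.2⟩)
      (fun y : Σ _ : Finset X, Finset X => ⟨y.1 \ y.2, y.2⟩)
    · intro z hz
      rw [Finset.mem_sigma] at hz
      obtain ⟨-, hdisj, -⟩ := pp_mem_BadF hz.2
      have hW : (z.1 ∪ z.2) \ z.2 = z.1 := by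
        rw [Finset.union_sdiff_cancel_right (Finset.disjoint_left.2
          fun a ha hb => (Finset.disjoint_left.1 hdisj) hb ha)]
      rw [Finset.mem_sigma]
      refine ⟨Finset.mem_univ _, Finset.mem_filter.2 ⟨Finset.mem_univ _,
        Finset.subset_union_right, ?_⟩⟩
      rw [hW]
      exact hz.2
    · intro y hy
      rw [Finset.mem_sigma, Finset.mem_filter] at hy
      rw [Finset.mem_sigma]
      exact ⟨Finset.mem_univ _, hy.2.2.2⟩
    · intro z hz
      rw [Finset.mem_sigma] at hz
      obtain ⟨-, hdisj, -⟩ := pp_mem_BadF hz.2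
      have hW : (z.1 ∪ z.2) \ z.2 = z.1 := by
        rw [Finset.union_sdiff_cancel_right (Finset.disjoint_left.2
          fun a ha hb => (Finset.disjoint_left.1 hdisj) hb ha)]
      exact Sigma.ext hW (heq_of_eq rfl)
    · intro y hy
      rw [Finset.mem_sigma, Finset.mem_filter] at hy
      exact Sigma.ext (Finset.sdiff_union_of_subset hy.2.2.1) (heq_of_eq rfl)
    · intro z hz
      rw [Finset.mem_sigma] at hz
      obtain ⟨-, hdisj, -⟩ := pp_mem_BadF hz.2
      have hW : (z.1 ∪ z.2) \ z.2 = z.1 := by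
        rw [Finset.union_sdiff_cancel_right (Finset.disjoint_left.2
          fun a ha hb => (Finset.disjoint_left.1 hdisj) hb ha)]
      rw [hW]
  rw [step1, step2, Finset.sum_sigma]
  calc ∑ Z : Finset X, ∑ T ∈ Finset.univ.filter (fun T => T ⊆ Z ∧ T ∈ BadF κ G (Z \ T)),
        mu q (Z \ T) * p ^ T.card
      ≤ ∑ Z : Finset X, ∑ T ∈ Finset.univ.filter (fun T => T ⊆ Z ∧ T ∈ BadF κ G (Z \ T)),
        mu q Z * (1 / 4096 : ℝ) ^ T.card := by
        apply Finset.sum_le_sum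
        intro Z _
        apply Finset.sum_le_sum
        intro T hT
        exact pp_weight_shift hp hq hq1 (Finset.mem_filter.1 hT).2.1
    _ ≤ ∑ Z : Finset X, mu q Z * ((1 / 1024 : ℝ) ^ (κ / 2 : ℝ)) := by
        apply Finset.sum_le_sum
        intro Z _
        rw [← Finset.mul_sum]
        exact mul_le_mul_of_nonneg_left (pp_inner_bound hκ hG Z)
          (pp_mu_nonneg (le_of_lt hq0) hq1 Z)
    _ = (1 / 1024 : ℝ) ^ (κ / 2 : ℝ) := by
        rw [← Finset.sum_mul, pp_sum_mu, one_mul]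

end PP

set_option linter.unusedSectionVars false
noncomputable section PP2
open scoped Classical
open Finset
variable {X : Type*} [Fintype X] [DecidableEq X]

/-! ### the multi-round recursions -/

variable (X) in
/-- expected total bad cost over `j` rounds -/
def EE (q p : ℝ) : ℕ → ℝ → Finset (Finset X) → ℝ
  | 0, _, _ => 0
  | j + 1, κ, G => ∑ W : Finset X,
      mu q W * (costW p (BadF κ G W) + EE q p j (κ / 2) (GoodF κ G W))

variable (X) in
/-- success probability over `j` rounds -/
def SP (q : ℝ) : ℕ → ℝ → Finset (Finset X) → ℝ
  | 0, _, G => if (∅ : Finset X) ∈ G then 1 else 0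
  | j + 1, κ, G => ∑ W : Finset X, mu q W * SP q j (κ / 2) (GoodF κ G W)

variable (X) in
/-- probability that `V` together with the union of `j` random sets lies in `F` -/
def FP (q : ℝ) (F : Finset (Finset X)) : ℕ → Finset X → ℝ
  | 0, V => if V ∈ F then 1 else 0
  | j + 1, V => ∑ W : Finset X, mu q W * FP q F j (V ∪ W)

/-- numeric bound sequence -/
def BB : ℕ → ℝ → ℝ
  | 0, _ => 0
  | j + 1, κ => (1 / 1024 : ℝ) ^ (κ / 2 : ℝ) + BB j (κ / 2)

lemma pp_SP_mem {q : ℝ} (hq0 : 0 ≤ q) (hq1 : q ≤ 1) :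
    ∀ (j : ℕ) (κ : ℝ) (G : Finset (Finset X)),
      0 ≤ SP X q j κ G ∧ SP X q j κ G ≤ 1 := by
  intro j
  induction j with
  | zero =>
    intro κ G
    constructor <;> simp only [SP] <;> split <;> norm_num
  | succ j ih =>
    intro κ G
    constructor
    · apply Finset.sum_nonneg
      intro W _
      exact mul_nonneg (pp_mu_nonneg hq0 hq1 W) (ih (κ / 2) (GoodF κ G W)).1
    · calc SP X q (j + 1) κ G ≤ ∑ W : Finset X, mu q W := by
            apply Finset.sum_le_sum
            intro W _
            exact mul_le_of_le_one_right (pp_mu_nonneg hq0 hq1 W)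
              (ih (κ / 2) (GoodF κ G W)).2
        _ = 1 := pp_sum_mu q

lemma pp_FP_nonneg {q : ℝ} (hq0 : 0 ≤ q) (hq1 : q ≤ 1) {F : Finset (Finset X)} :
    ∀ (j : ℕ) (V : Finset X), 0 ≤ FP X q F j V := by
  intro j
  induction j with
  | zero =>
    intro V
    simp only [FP]
    split <;> norm_num
  | succ j ih =>
    intro V
    exact Finset.sum_nonneg fun W _ =>
      mul_nonneg (pp_mu_nonneg hq0 hq1 W) (ih (V ∪ W))

/-- Lemma A: success implies the union hits `F` -/
lemma pp_SP_le_FP {q : ℝ} (hq0 : 0 ≤ q) (hq1 : q ≤ 1) {F : Finset (Finset X)}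
    (hF : IsUpperFam F) :
    ∀ (j : ℕ) (κ : ℝ) (G : Finset (Finset X)) (V : Finset X),
      (∀ T ∈ G, ∃ S ∈ F, S ⊆ T ∪ V) → SP X q j κ G ≤ FP X q F j V := by
  intro j
  induction j with
  | zero =>
    intro κ G V hinv
    simp only [SP, FP]
    by_cases hG : (∅ : Finset X) ∈ G
    · obtain ⟨S, hSF, hSV⟩ := hinv ∅ hG
      rw [Finset.empty_union] at hSV
      rw [if_pos hG, if_pos (hF S hSF V hSV)]
    · rw [if_neg hG]
      split <;> norm_num
  | succ j ih =>
    intro κ G V hinv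
    apply Finset.sum_le_sum
    intro W _
    apply mul_le_mul_of_nonneg_left _ (pp_mu_nonneg hq0 hq1 W)
    apply ih (κ / 2) (GoodF κ G W) (V ∪ W)
    intro T hT
    obtain ⟨-, S', hS'G, hTS'⟩ := pp_mem_GoodF hT
    obtain ⟨S, hSF, hSS'⟩ := hinv S' hS'G
    refine ⟨S, hSF, fun x hx => ?_⟩
    rcases Finset.mem_union.1 (hSS' hx) with h | h
    · rcases Classical.em (x ∈ W) with hw | hw
      · exact Finset.mem_union.2 (Or.inr (Finset.mem_union.2 (Or.inr hw)))
      · exact Finset.mem_union.2 (Or.inl (hTS' ▸ Finset.mem_sdiff.2 ⟨h, hw⟩))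
    · exact Finset.mem_union.2 (Or.inr (Finset.mem_union.2 (Or.inl h)))

lemma pp_muF_zero (A : Finset (Finset X)) :
    muF 0 A = if (∅ : Finset X) ∈ A then (1:ℝ) else 0 := by
  unfold muF
  have h : ∀ S ∈ A, mu (0:ℝ) S = if S = ∅ then (1:ℝ) else 0 := by
    intro S _
    unfold mu
    by_cases hS : S = ∅
    · subst hS; simp
    · rw [if_neg hS]
      have : S.card ≠ 0 := fun h => hS (Finset.card_eq_zero.1 h)
      rw [zero_pow this, zero_mul]
  rw [Finset.sum_congr rfl h, Finset.sum_ite_eq' A ∅ (fun _ => (1:ℝ))]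

/-- Lemma B: `FP` computes the biased measure of the translated family -/
lemma pp_FP_eq {q : ℝ} {F : Finset (Finset X)} :
    ∀ (j : ℕ) (V : Finset X),
      FP X q F j V = muF (1 - (1 - q) ^ j) (Finset.univ.filter fun S => S ∪ V ∈ F) := by
  intro j
  induction j with
  | zero =>
    intro V
    simp only [FP, pow_zero, sub_self]
    rw [pp_muF_zero]
    congr 1
    simp [Finset.mem_filter]
  | succ j ih =>
    intro V
    have hconv := pp_union_convolution (X := X) q (1 - (1 - q) ^ j)
      (Finset.univ.filter fun S => S ∪ V ∈ F)
    have hθ : q + (1 - (1 - q) ^ j) - q * (1 - (1 - q) ^ j) = 1 - (1 - q) ^ (j + 1) := by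
      rw [pow_succ]
      ring
    rw [hθ] at hconv
    simp only [FP]
    rw [← hconv, Finset.sum_product]
    apply Finset.sum_congr rfl
    intro W _
    rw [ih (V ∪ W)]
    unfold muF
    rw [Finset.mul_sum, Finset.sum_filter]
    apply Finset.sum_congr rfl
    intro A _
    have hu : A ∪ (V ∪ W) = W ∪ A ∪ V := by
      rw [Finset.union_comm V W, ← Finset.union_assoc, Finset.union_comm A W]
    simp only [Finset.mem_filter, Finset.mem_univ, true_and, hu]
    by_cases h : W ∪ A ∪ V ∈ F <;> simp [h]

/-- the KEY lemma: failure forces an expensive bad cover -/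
lemma pp_KEY {p q : ℝ} (hp : 0 ≤ p) (hq0 : 0 ≤ q) (hq1 : q ≤ 1) :
    ∀ (j : ℕ) (κ : ℝ) (G : Finset (Finset X)), 0 ≤ κ → κ < 2 ^ j → SizeLE κ G →
      (1 - SP X q j κ G) * minCost p G ≤ EE X q p j κ G := by
  intro j
  induction j with
  | zero =>
    intro κ G hκ0 hκ1 hsize
    simp only [SP, EE, pow_zero] at *
    by_cases hG : (∅ : Finset X) ∈ G
    · rw [if_pos hG]
      simp
    · have hGe : G = ∅ := by
        apply Finset.eq_empty_of_forall_notMem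
        intro S hS
        have h1 := hsize S hS
        have h2 : S.card = 0 := by
          by_contra h
          have : (1:ℝ) ≤ (S.card : ℝ) := by
            exact_mod_cast Nat.one_le_iff_ne_zero.2 h
          linarith
        exact hG (Finset.card_eq_zero.1 h2 ▸ hS)
      rw [if_neg hG]
      have hmc : minCost p G = 0 := by
        apply le_antisymm
        · have : IsCover (∅ : Finset (Finset X)) G := by
            rw [hGe]; intro S hS; exact absurd hS (Finset.notMem_empty S)
          have h := pp_minCost_le (p := p) this
          simpa [costW] using h
        · exact pp_minCost_nonneg hp G
      rw [hmc]
      simp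
  | succ j ih =>
    intro κ G hκ0 hκ1 hsize
    have h1 : (1 - SP X q (j+1) κ G) * minCost p G
        = ∑ W : Finset X, mu q W * ((1 - SP X q j (κ/2) (GoodF κ G W)) * minCost p G) := by
      simp only [SP]
      have hsum : (1:ℝ) - ∑ W : Finset X, mu q W * SP X q j (κ/2) (GoodF κ G W)
          = ∑ W : Finset X, mu q W * ((1:ℝ) - SP X q j (κ/2) (GoodF κ G W)) := by
        simp only [mul_sub, mul_one, Finset.sum_sub_distrib, pp_sum_mu]
      rw [hsum, Finset.sum_mul]
      apply Finset.sum_congr rfl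
      intro W _
      ring
    rw [h1]
    simp only [EE]
    apply Finset.sum_le_sum
    intro W _
    apply mul_le_mul_of_nonneg_left _ (pp_mu_nonneg hq0 hq1 W)
    have hSPj := pp_SP_mem (X := X) hq0 hq1 j (κ/2) (GoodF κ G W)
    have hstep := pp_minCost_step (p := p) hp κ G W
    have hIH := ih (κ/2) (GoodF κ G W) (by linarith) (by
        have : (2:ℝ) ^ (j+1) = 2 * 2 ^ j := by ring
        rw [this] at hκ1
        linarith) (pp_GoodF_sizes κ G W)
    have hcost := pp_costW_nonneg hp (BadF κ G W)
    have hmcg := pp_minCost_nonneg (p := p) hp (GoodF κ G W)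
    nlinarith [hSPj.1, hSPj.2]

/-- EE is bounded by the numeric sequence BB -/
lemma pp_EE_le_BB {p q : ℝ} (hp : 0 < p) (hq : q = 4096 * p) (hq1 : q ≤ 1) :
    ∀ (j : ℕ) (κ : ℝ) (G : Finset (Finset X)), 0 ≤ κ → SizeLE κ G →
      EE X q p j κ G ≤ BB j κ := by
  have hq0 : 0 ≤ q := by rw [hq]; linarith
  intro j
  induction j with
  | zero => intro κ G hκ0 hsize; simp [EE, BB]
  | succ j ih =>
    intro κ G hκ0 hsize
    simp only [EE, BB]
    have hsplit : ∑ W : Finset X,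
        mu q W * (costW p (BadF κ G W) + EE X q p j (κ / 2) (GoodF κ G W))
        = (∑ W : Finset X, mu q W * costW p (BadF κ G W))
          + ∑ W : Finset X, mu q W * EE X q p j (κ / 2) (GoodF κ G W) := by
      rw [← Finset.sum_add_distrib]
      apply Finset.sum_congr rfl
      intro W _
      ring
    rw [hsplit]
    have h2 : ∑ W : Finset X, mu q W * EE X q p j (κ / 2) (GoodF κ G W) ≤ BB j (κ / 2) := by
      calc ∑ W : Finset X, mu q W * EE X q p j (κ / 2) (GoodF κ G W)
          ≤ ∑ W : Finset X, mu q W * BB j (κ / 2) := by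
            apply Finset.sum_le_sum
            intro W _
            exact mul_le_mul_of_nonneg_left
              (ih (κ/2) (GoodF κ G W) (by linarith) (pp_GoodF_sizes κ G W))
              (pp_mu_nonneg hq0 hq1 W)
        _ = BB j (κ / 2) := by rw [← Finset.sum_mul, pp_sum_mu, one_mul]
    have h1 := pp_round_bound hp hq hq1 hκ0 hsize
    linarith

end PP2

set_option linter.unusedSectionVars false
set_option maxHeartbeats 1000000
noncomputable section PP3
open scoped Classical
open Finset
variable {X : Type*} [Fintype X] [DecidableEq X]

/-! ### numeric bound for BB -/

lemma pp_BB_eq : ∀ (j : ℕ) (κ : ℝ),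
    BB j κ = ∑ i ∈ Finset.range j, (1/1024 : ℝ) ^ ((κ / 2 ^ (i+1)) : ℝ) := by
  intro j
  induction j with
  | zero => intro κ; simp [BB]
  | succ j ih =>
    intro κ
    rw [Finset.sum_range_succ']
    have h0 : (1/1024 : ℝ) ^ ((κ / 2 ^ (0+1)) : ℝ) = (1/1024 : ℝ) ^ ((κ / 2) : ℝ) := by
      norm_num
    rw [h0]
    have h1 : ∀ i ∈ Finset.range j,
        (1/1024 : ℝ) ^ ((κ / 2 ^ (i+1+1)) : ℝ) = (1/1024 : ℝ) ^ (((κ/2) / 2 ^ (i+1)) : ℝ) := by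
      intro i _
      congr 1
      rw [pow_succ]
      ring
    rw [Finset.sum_congr rfl h1, ← ih (κ/2)]
    show BB (j+1) κ = BB j (κ/2) + (1/1024 : ℝ) ^ ((κ / 2) : ℝ)
    simp only [BB]
    ring

lemma pp_geom_le_two (j : ℕ) : ∑ m ∈ Finset.range j, (1/32 : ℝ) ^ m ≤ 2 := by
  rw [geom_sum_eq (by norm_num : (1/32 : ℝ) ≠ 1)]
  rw [div_le_iff_of_neg (by norm_num : (1/32 : ℝ) - 1 < 0)]
  have h0 : (0:ℝ) ≤ (1/32 : ℝ) ^ j := by positivity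
  linarith

lemma pp_half_pow (m : ℕ) :
    (1/1024 : ℝ) ^ ((((2:ℝ) ^ m) / 2) : ℝ) = (1/32 : ℝ) ^ (2 ^ m : ℕ) := by
  have h1 : (1/1024 : ℝ) = (1/32 : ℝ) ^ ((2:ℕ) : ℝ) := by
    rw [Real.rpow_natCast]
    norm_num
  rw [h1, ← Real.rpow_mul (by norm_num : (0:ℝ) ≤ 1/32)]
  have h2 : ((2:ℕ) : ℝ) * ((2:ℝ) ^ m / 2) = ((2 ^ m : ℕ) : ℝ) := by
    push_cast
    ring
  rw [h2, Real.rpow_natCast]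

lemma pp_BB_le {j : ℕ} {κ : ℝ} (hκ : (2:ℝ) ^ j ≤ 2 * κ) : BB j κ ≤ 1/16 := by
  rw [pp_BB_eq]
  have hκ0 : 0 ≤ κ := by
    have : (0:ℝ) < 2 ^ j := by positivity
    linarith
  have hterm : ∀ i ∈ Finset.range j,
      (1/1024 : ℝ) ^ ((κ / 2 ^ (i+1)) : ℝ) ≤ (1/32 : ℝ) ^ (2 ^ (j-1-i) : ℕ) := by
    intro i hi
    rw [Finset.mem_range] at hi
    rw [← pp_half_pow]
    apply Real.rpow_le_rpow_of_exponent_ge (by norm_num) (by norm_num)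
    have hpow : (2:ℝ) ^ (j-1-i) * (2 ^ (i+1)) = 2 ^ j := by
      rw [← pow_add]
      congr 1
      omega
    rw [div_le_div_iff₀ (by norm_num) (by positivity)]
    calc (2:ℝ) ^ (j-1-i) * 2 ^ (i+1) = 2 ^ j := hpow
      _ ≤ 2 * κ := hκ
      _ = κ * 2 := by ring
  calc ∑ i ∈ Finset.range j, (1/1024 : ℝ) ^ ((κ / 2 ^ (i+1)) : ℝ)
      ≤ ∑ i ∈ Finset.range j, (1/32 : ℝ) ^ (2 ^ (j-1-i) : ℕ) := Finset.sum_le_sum hterm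
    _ = ∑ m ∈ Finset.range j, (1/32 : ℝ) ^ (2 ^ m : ℕ) :=
        Finset.sum_range_reflect (fun m => (1/32 : ℝ) ^ (2 ^ m : ℕ)) j
    _ ≤ ∑ m ∈ Finset.range j, (1/32 : ℝ) ^ (m + 1) := by
        apply Finset.sum_le_sum
        intro m _
        exact pow_le_pow_of_le_one (by norm_num) (by norm_num)
          (Nat.succ_le_of_lt (Nat.lt_two_pow_self (n := m)))
    _ = (1/32 : ℝ) * ∑ m ∈ Finset.range j, (1/32 : ℝ) ^ m := by
        rw [Finset.mul_sum]
        apply Finset.sum_congr rfl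
        intro m _
        ring
    _ ≤ (1/32 : ℝ) * 2 := by
        have := pp_geom_le_two j
        linarith
    _ ≤ 1/16 := by norm_num

/-! ### minimal elements -/

def minimalsF' (F : Finset (Finset X)) : Finset (Finset X) :=
  F.filter fun S => ∀ T ∈ F, T ⊆ S → T = S

lemma pp_exists_minimal {F : Finset (Finset X)} {S : Finset X} (hS : S ∈ F) :
    ∃ M ∈ minimalsF' F, M ⊆ S := by
  obtain ⟨M, hM, hmin⟩ := Finset.exists_min_image (F.filter (fun T => T ⊆ S))
    Finset.card ⟨S, Finset.mem_filter.2 ⟨hS, Finset.Subset.refl S⟩⟩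
  rw [Finset.mem_filter] at hM
  refine ⟨M, Finset.mem_filter.2 ⟨hM.1, fun T hT hTM => ?_⟩, hM.2⟩
  have hTs : T ∈ F.filter (fun T => T ⊆ S) :=
    Finset.mem_filter.2 ⟨hT, hTM.trans hM.2⟩
  exact Finset.eq_of_subset_of_card_le hTM (hmin T hTs)

end PP3

set_option linter.unusedSectionVars false
set_option maxHeartbeats 1000000
noncomputable section PP4
open scoped Classical
open Finset
variable {X : Type*} [Fintype X] [DecidableEq X]

def PSmall' (p : ℝ) (F : Finset (Finset X)) : Prop :=
  ∃ G : Finset (Finset X), IsCover G F ∧ ∑ T ∈ G, p ^ T.card ≤ 1 / 2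

def qThr' (F : Finset (Finset X)) : ℝ :=
  sSup {p : ℝ | p ∈ Set.Icc (0 : ℝ) 1 ∧ PSmall' p F}

def ell0' (F : Finset (Finset X)) : ℕ := (minimalsF' F).sup Finset.card

def ell' (F : Finset (Finset X)) : ℕ := max (ell0' F) 2

variable {F : Finset (Finset X)}

lemma pp_empty_not_mem (hF : IsUpperFam F) (h1 : F ≠ Finset.univ) : (∅ : Finset X) ∉ F :=
  fun h => h1 (Finset.eq_univ_of_forall fun S => hF ∅ h S (Finset.empty_subset S))

lemma pp_univ_mem (hF : IsUpperFam F) (h0 : F ≠ ∅) : (Finset.univ : Finset X) ∈ F := by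
  obtain ⟨S, hS⟩ := Finset.nonempty_of_ne_empty h0
  exact hF S hS Finset.univ (Finset.subset_univ S)

lemma pp_minimalsF_cover : IsCover (minimalsF' F) F := fun S hS => by
  obtain ⟨M, hM, hMS⟩ := pp_exists_minimal hS
  exact ⟨M, hM, hMS⟩

lemma pp_minimal_cover_lift {H : Finset (Finset X)} (hH : IsCover H (minimalsF' F)) :
    IsCover H F := by
  intro S hS
  obtain ⟨M, hM, hMS⟩ := pp_exists_minimal hS
  obtain ⟨T, hT, hTM⟩ := hH M hM
  exact ⟨T, hT, hTM.trans hMS⟩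

lemma pp_minimals_size : SizeLE ((ell' F : ℕ) : ℝ) (minimalsF' F) := by
  intro M hM
  have h1 : M.card ≤ ell0' F := Finset.le_sup hM
  have h2 : ell0' F ≤ ell' F := le_max_left _ _
  exact_mod_cast h1.trans h2

lemma pp_Q_bdd : BddAbove {p : ℝ | p ∈ Set.Icc (0 : ℝ) 1 ∧ PSmall' p F} :=
  ⟨1, fun x hx => hx.1.2⟩

lemma pp_zero_mem_Q (hF : IsUpperFam F) (h0 : F ≠ ∅) (h1 : F ≠ Finset.univ) :
    (0 : ℝ) ∈ {p : ℝ | p ∈ Set.Icc (0 : ℝ) 1 ∧ PSmall' p F} := by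
  refine ⟨⟨le_refl 0, zero_le_one⟩, minimalsF' F, pp_minimalsF_cover, ?_⟩
  have hz : ∀ T ∈ minimalsF' F, (0:ℝ) ^ T.card = 0 := by
    intro T hT
    have hTF : T ∈ F := Finset.filter_subset _ F hT
    have hTne : T ≠ ∅ := fun he => pp_empty_not_mem hF h1 (he ▸ hTF)
    exact zero_pow fun hc => hTne (Finset.card_eq_zero.1 hc)
  rw [Finset.sum_congr rfl hz]
  norm_num

lemma pp_qThr_nonneg (hF : IsUpperFam F) (h0 : F ≠ ∅) (h1 : F ≠ Finset.univ) :
    0 ≤ qThr' F :=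
  le_csSup pp_Q_bdd (pp_zero_mem_Q hF h0 h1)

lemma pp_not_psmall (hF : IsUpperFam F) (h0 : F ≠ ∅) (h1 : F ≠ Finset.univ)
    {p : ℝ} (hp : qThr' F < p) (hp1 : p ≤ 1) : ¬ PSmall' p F := by
  intro hps
  have h0p : 0 ≤ p := (pp_qThr_nonneg hF h0 h1).trans (le_of_lt hp)
  exact absurd (le_csSup pp_Q_bdd ⟨⟨h0p, hp1⟩, hps⟩) (not_le.2 hp)

lemma pp_part1 (hF : IsUpperFam F) (h0 : F ≠ ∅) (h1 : F ≠ Finset.univ)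
    {pc : ℝ} (hpc : pc ∈ Set.Icc (0:ℝ) 1) (hmu : muF pc F = 1 / 2) : qThr' F ≤ pc := by
  apply csSup_le ⟨0, pp_zero_mem_Q hF h0 h1⟩
  intro x hx
  by_contra hlt
  push_neg at hlt
  obtain ⟨⟨hx0, hx1⟩, G, hGcov, hGcost⟩ := hx
  have hle : muF x F ≤ 1/2 := le_trans (pp_cover_bound hx0 hx1 hGcov) hGcost
  have hstrict := pp_muF_lt_of_upper hF (pp_empty_not_mem hF h1)
    (pp_univ_mem hF h0) hpc.1 hlt hx1
  rw [hmu] at hstrict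
  linarith

lemma pp_estimate (hF : IsUpperFam F) (h0 : F ≠ ∅) (h1 : F ≠ Finset.univ)
    {pc : ℝ} (hpc : pc ∈ Set.Icc (0:ℝ) 1) (hmu : muF pc F = 1 / 2)
    {p : ℝ} (hp : qThr' F < p) (hp1 : p ≤ 1) :
    pc ≤ 4096 * ((Nat.log 2 (ell' F) + 1 : ℕ) : ℝ) * p := by
  set ℓ := ell' F with hℓ
  set L : ℕ := Nat.log 2 ℓ + 1 with hL
  have hp0 : 0 < p := lt_of_le_of_lt (pp_qThr_nonneg hF h0 h1) hp
  have hL1 : (1:ℝ) ≤ (L:ℕ) := by exact_mod_cast Nat.succ_le_succ (Nat.zero_le _)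
  by_cases hq1 : 4096 * p ≤ 1
  · -- the main case
    have hnp : ¬ PSmall' p F := pp_not_psmall hF h0 h1 hp hp1
    have hq0 : (0:ℝ) ≤ 4096 * p := by linarith
    have hℓ2 : 2 ≤ ℓ := le_max_right _ _
    have hℓ0 : ℓ ≠ 0 := by omega
    have hℓlt : ((ℓ:ℕ) : ℝ) < 2 ^ L := by
      have := Nat.lt_pow_succ_log_self (by norm_num : 1 < 2) ℓ
      exact_mod_cast this
    have hsize := pp_minimals_size (F := F)
    have hmc : 1/2 < minCost p (minimalsF' F) := by
      by_contra hmc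
      push_neg at hmc
      obtain ⟨H, hHcov, hHcost⟩ := pp_minCost_attained p (minimalsF' F)
      refine hnp ⟨H, pp_minimal_cover_lift hHcov, ?_⟩
      show costW p H ≤ 1/2
      rw [hHcost]
      exact hmc
    have hKEY := pp_KEY (p := p) (q := 4096 * p) (le_of_lt hp0) hq0 hq1 L ((ℓ:ℕ):ℝ)
      (minimalsF' F) (by positivity) hℓlt hsize
    have hEE := pp_EE_le_BB (p := p) (q := 4096 * p) hp0 rfl hq1 L ((ℓ:ℕ):ℝ)
      (minimalsF' F) (by positivity) hsize
    have hBB : BB L ((ℓ:ℕ):ℝ) ≤ 1/16 := by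
      apply pp_BB_le
      have hnat : 2 ^ L ≤ 2 * ℓ := by
        rw [hL, pow_succ]
        have := Nat.pow_log_le_self 2 hℓ0
        omega
      exact_mod_cast hnat
    have hSPm := pp_SP_mem (X := X) hq0 hq1 L ((ℓ:ℕ):ℝ) (minimalsF' F)
    have hSP : 7/8 ≤ SP X (4096 * p) L ((ℓ:ℕ):ℝ) (minimalsF' F) := by
      nlinarith [hSPm.1, hSPm.2]
    have hinv : ∀ T ∈ minimalsF' F, ∃ S ∈ F, S ⊆ T ∪ (∅ : Finset X) := by
      intro T hT
      exact ⟨T, Finset.filter_subset _ F hT, by rw [Finset.union_empty]⟩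
    have hFP := pp_SP_le_FP (X := X) hq0 hq1 hF L ((ℓ:ℕ):ℝ) (minimalsF' F) ∅ hinv
    have hFPeq := pp_FP_eq (X := X) (q := 4096 * p) (F := F) L ∅
    have hfilter : (Finset.univ.filter fun S : Finset X => S ∪ ∅ ∈ F) = F := by
      ext S
      simp [Finset.union_empty]
    rw [hfilter] at hFPeq
    set θ : ℝ := 1 - (1 - 4096 * p) ^ L with hθdef
    have hmuθ : 7/8 ≤ muF θ F := by
      rw [← hFPeq]
      linarith
    have hθ0 : 0 ≤ θ := by
      have : (1 - 4096 * p) ^ L ≤ 1 := pow_le_one₀ (by linarith) (by linarith)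
      rw [hθdef]
      linarith
    have hθL : θ ≤ (L:ℝ) * (4096 * p) := by
      have hber := one_add_mul_le_pow (a := -(4096 * p)) (by linarith) L
      have h2 : (1 + -(4096*p)) ^ L = (1 - 4096*p)^L := by ring_nf
      rw [h2] at hber
      rw [hθdef]
      have : 1 + (L:ℝ) * -(4096*p) = 1 - (L:ℝ)*(4096*p) := by ring
      rw [this] at hber
      linarith
    have hpcθ : pc < θ := by
      by_contra hcon
      push_neg at hcon
      have := pp_muF_le_of_upper hF hθ0 hcon hpc.2
      rw [hmu] at this
      linarith
    calc pc ≤ (L:ℝ) * (4096 * p) := by linarith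
      _ = 4096 * ((L:ℕ):ℝ) * p := by ring
  · -- trivial case : 4096 p > 1
    push_neg at hq1
    have h2 : pc ≤ 1 := hpc.2
    nlinarith

theorem pp_main (hF : IsUpperFam F) (h0 : F ≠ ∅) (h1 : F ≠ Finset.univ)
    {pc : ℝ} (hpc : pc ∈ Set.Icc (0:ℝ) 1) (hmu : muF pc F = 1 / 2) :
    qThr' F ≤ pc ∧ pc ≤ 8192 * qThr' F * Real.logb 2 (ell' F) := by
  refine ⟨pp_part1 hF h0 h1 hpc hmu, ?_⟩
  set ℓ := ell' F with hℓ
  set L : ℕ := Nat.log 2 ℓ + 1 with hL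
  have hq0 := pp_qThr_nonneg hF h0 h1
  have hL1 : (1:ℝ) ≤ (L:ℝ) := by exact_mod_cast Nat.succ_le_succ (Nat.zero_le _)
  have hLpos : (0:ℝ) < 4096 * (L:ℝ) := by linarith
  have hstep : pc ≤ 4096 * (L:ℝ) * qThr' F := by
    by_contra h
    push_neg at h
    set β := pc / (4096 * (L:ℝ)) with hβ
    have hqβ : qThr' F < β := by
      rw [hβ, lt_div_iff₀ hLpos]
      calc qThr' F * (4096 * (L:ℝ)) = 4096 * (L:ℝ) * qThr' F := by ring
        _ < pc := h
    have hβ1 : β ≤ 1 := by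
      rw [hβ, div_le_one hLpos]
      calc pc ≤ 1 := hpc.2
        _ ≤ 4096 * (L:ℝ) := by linarith
    set m := (qThr' F + β) / 2 with hm
    have hm1 : qThr' F < m := by rw [hm]; linarith
    have hm2 : m < β := by rw [hm]; linarith
    have hm3 : m ≤ 1 := le_of_lt (lt_of_lt_of_le hm2 hβ1)
    have hest := pp_estimate hF h0 h1 hpc hmu hm1 hm3
    rw [← hL] at hest
    have hfin : 4096 * (L:ℝ) * m < 4096 * (L:ℝ) * β :=
      mul_lt_mul_of_pos_left hm2 hLpos
    have hβeq : 4096 * (L:ℝ) * β = pc := by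
      rw [hβ]
      field_simp
    nlinarith
  have hlog1 : (1:ℝ) ≤ Real.logb 2 ℓ := by
    have h2 : Real.logb 2 2 = 1 := Real.logb_self_eq_one (by norm_num)
    rw [← h2]
    apply Real.logb_le_logb_of_le (by norm_num) (by norm_num)
    exact_mod_cast le_max_right (ell0' F) 2
  have hlogL : (L:ℝ) ≤ 2 * Real.logb 2 ℓ := by
    have hnat : ((Nat.log 2 ℓ : ℕ) : ℝ) ≤ Real.logb 2 ℓ := Real.natLog_le_logb ℓ 2
    have : (L:ℝ) = ((Nat.log 2 ℓ : ℕ) : ℝ) + 1 := by rw [hL]; push_cast; ring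
    rw [this]
    linarith
  calc pc ≤ 4096 * (L:ℝ) * qThr' F := hstep
    _ ≤ 4096 * (2 * Real.logb 2 ℓ) * qThr' F := by nlinarith
    _ = 8192 * qThr' F * Real.logb 2 ℓ := by ring

/-- **Park–Pham theorem.** There is a universal constant `K > 0` such that for every nonempty
finite set `X` and every nontrivial upper set `F ⊆ 2^X`,
`q(F) ≤ p_c(F) ≤ K · q(F) · log₂ ℓ(F)`, where `p_c(F)` is the (unique) `p ∈ [0,1]` with
`μ_p(F) = 1/2`. -/
theorem park_pham :
    ∃ K : ℝ, 0 < K ∧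
      ∀ (X : Type) [Fintype X] [DecidableEq X] [Nonempty X] (F : Finset (Finset X)),
        IsUpperFam F → F ≠ ∅ → F ≠ Finset.univ →
        ∀ pc ∈ Set.Icc (0 : ℝ) 1, muF pc F = 1 / 2 →
          qThr F ≤ pc ∧ pc ≤ K * qThr F * Real.logb 2 (ell F) := by
  classical
  refine ⟨8192, by norm_num, ?_⟩
  intro X _ _ _ F hF h0 h1 pc hpc hmu
  have hmin : minimalsF' F = minimalsF F := by
    ext S
    simp [minimalsF', minimalsF, Finset.mem_filter]
  have hell : ell' F = ell F := by
    rw [ell', ell, ell0', ell0, hmin]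
  have hq : qThr' F = qThr F := rfl
  have hmain := pp_main hF h0 h1 hpc hmu
  rw [hq, hell] at hmain
  exact hmain
end PP4
end

section
/- For every nonempty finite set X, every nontrivial upper set F ⊆ 2^X, every ε ∈ (0,1), and every p ∈ (0,1] satisfying p > 48 · q(F) · log₂(ℓ_0(F)/ε), one has μ_p(F) > 1 − ε. -/
open Finset

set_option maxHeartbeats 1000000

namespace BellAux
open Finset
variable {X : Type*} [Fintype X] [DecidableEq X]

lemma mu_nonneg {p : ℝ} (h0 : 0 ≤ p) (h1 : p ≤ 1) (S : Finset X) : 0 ≤ mu p S :=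
  mul_nonneg (pow_nonneg h0 _) (pow_nonneg (by linarith) _)

lemma sum_pow_card (S : Finset X) (a b : ℝ) :
    ∑ W ∈ S.powerset, a ^ W.card * b ^ (S.card - W.card) = (a + b) ^ S.card := by
  have h := Finset.prod_add (fun _ : X => a) (fun _ => b) S
  rw [Finset.prod_const] at h
  rw [h]
  refine Finset.sum_congr rfl fun t ht => ?_
  rw [Finset.prod_const, Finset.prod_const, Finset.card_sdiff_of_subset (Finset.mem_powerset.mp ht)]

lemma sum_mu_univ (p : ℝ) : ∑ W : Finset X, mu p W = 1 := by
  have h : (Finset.univ : Finset (Finset X)) = (Finset.univ : Finset X).powerset :=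
    Finset.powerset_univ.symm
  rw [h]
  have := sum_pow_card (Finset.univ : Finset X) p (1 - p)
  simp only [mu, Finset.card_univ] at *
  rw [this, add_sub_cancel, one_pow]

lemma muF_nonneg {p : ℝ} (h0 : 0 ≤ p) (h1 : p ≤ 1) (G : Finset (Finset X)) : 0 ≤ muF p G :=
  Finset.sum_nonneg fun S _ => mu_nonneg h0 h1 S

lemma muF_mono_subset {p : ℝ} (h0 : 0 ≤ p) (h1 : p ≤ 1) {G G' : Finset (Finset X)}
    (h : G ⊆ G') : muF p G ≤ muF p G' :=
  Finset.sum_le_sum_of_subset_of_nonneg h fun S _ _ => mu_nonneg h0 h1 S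

lemma muF_le_one {p : ℝ} (h0 : 0 ≤ p) (h1 : p ≤ 1) (G : Finset (Finset X)) : muF p G ≤ 1 := by
  have := muF_mono_subset h0 h1 (Finset.subset_univ G)
  have h2 : muF p (Finset.univ : Finset (Finset X)) = 1 := sum_mu_univ p
  linarith

lemma mu_union_pair (U : Finset X) (a b : ℝ) :
    ∑ WV ∈ Finset.filter (fun q : Finset X × Finset X => q.1 ∪ q.2 = U) Finset.univ,
      mu a WV.1 * mu b WV.2 = mu (a + b - a * b) U := by
  classical
  have key : ∑ WV ∈ Finset.filter (fun q : Finset X × Finset X => q.1 ∪ q.2 = U) Finset.univ,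
      mu a WV.1 * mu b WV.2
      = ∑ x ∈ (U.powerset).sigma (fun W => W.powerset), mu a x.1 * mu b ((U \ x.1) ∪ x.2) := by
    refine Finset.sum_bij' (i := fun q _ => (⟨q.1, q.2 ∩ q.1⟩ : (_ : Finset X) × Finset X))
      (j := fun x _ => (x.1, (U \ x.1) ∪ x.2)) ?_ ?_ ?_ ?_ ?_
    · intro q hq
      simp only [Finset.mem_filter, Finset.mem_univ, true_and] at hq
      simp only [Finset.mem_sigma, Finset.mem_powerset]
      exact ⟨hq ▸ Finset.subset_union_left, Finset.inter_subset_right⟩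
    · intro x hx
      simp only [Finset.mem_sigma, Finset.mem_powerset] at hx
      simp only [Finset.mem_filter, Finset.mem_univ, true_and]
      rw [← Finset.union_assoc, Finset.union_sdiff_of_subset hx.1,
        Finset.union_eq_left.mpr (hx.2.trans hx.1)]
    · intro q hq
      simp only [Finset.mem_filter, Finset.mem_univ, true_and] at hq
      have h1 : U \ q.1 = q.2 \ q.1 := by rw [← hq, Finset.union_sdiff_left]
      have h2 : (U \ q.1) ∪ (q.2 ∩ q.1) = q.2 := by rw [h1, Finset.sdiff_union_inter]
      show (q.1, U \ q.1 ∪ q.2 ∩ q.1) = q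
      rw [h2]
    · intro x hx
      simp only [Finset.mem_sigma, Finset.mem_powerset] at hx
      have : ((U \ x.1) ∪ x.2) ∩ x.1 = x.2 := by
        rw [Finset.union_inter_distrib_right, Finset.sdiff_inter_self, Finset.empty_union,
          Finset.inter_eq_left.mpr hx.2]
      exact Sigma.ext rfl (heq_of_eq this)
    · intro q hq
      simp only [Finset.mem_filter, Finset.mem_univ, true_and] at hq
      have h1 : U \ q.1 = q.2 \ q.1 := by rw [← hq, Finset.union_sdiff_left]
      rw [h1, Finset.sdiff_union_inter]
  rw [key, Finset.sum_sigma]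
  have hn := fun (W : Finset X) (hW : W ⊆ U) => Finset.card_le_card hW
  -- compute inner sums
  have inner : ∀ W ∈ U.powerset,
      ∑ K ∈ W.powerset, mu a W * mu b ((U \ W) ∪ K)
      = mu a W * (b ^ (U.card - W.card) * (1 - b) ^ (Fintype.card X - U.card)) := by
    intro W hW
    rw [Finset.mem_powerset] at hW
    have hWU : W.card ≤ U.card := Finset.card_le_card hW
    have hUn : U.card ≤ Fintype.card X := Finset.card_le_card (Finset.subset_univ U)
    rw [← Finset.mul_sum]
    congr 1
    have step : ∀ K ∈ W.powerset, mu b ((U \ W) ∪ K)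
        = (b ^ (U.card - W.card) * (1 - b) ^ (Fintype.card X - U.card))
          * (b ^ K.card * (1 - b) ^ (W.card - K.card)) := by
      intro K hK
      rw [Finset.mem_powerset] at hK
      have hKW : K.card ≤ W.card := Finset.card_le_card hK
      have hdisj : Disjoint (U \ W) K :=
        Finset.disjoint_of_subset_right hK Finset.sdiff_disjoint
      have hcard : ((U \ W) ∪ K).card = (U.card - W.card) + K.card := by
        rw [Finset.card_union_of_disjoint hdisj, Finset.card_sdiff_of_subset hW]
      unfold mu
      rw [hcard]
      have e1 : Fintype.card X - (U.card - W.card + K.card)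
          = (W.card - K.card) + (Fintype.card X - U.card) := by omega
      rw [e1, pow_add, pow_add]
      ring
    rw [Finset.sum_congr rfl step, ← Finset.mul_sum, sum_pow_card]
    have : b + (1 - b) = 1 := by ring
    rw [this, one_pow, mul_one]
  rw [Finset.sum_congr rfl inner]
  -- outer sum
  have hUn : U.card ≤ Fintype.card X := Finset.card_le_card (Finset.subset_univ U)
  have outer : ∀ W ∈ U.powerset,
      mu a W * (b ^ (U.card - W.card) * (1 - b) ^ (Fintype.card X - U.card))
      = (((1 - a) * (1 - b)) ^ (Fintype.card X - U.card))
        * (a ^ W.card * ((1 - a) * b) ^ (U.card - W.card)) := by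
    intro W hW
    rw [Finset.mem_powerset] at hW
    have hWU : W.card ≤ U.card := Finset.card_le_card hW
    unfold mu
    have e1 : Fintype.card X - W.card = (U.card - W.card) + (Fintype.card X - U.card) := by omega
    rw [e1, pow_add, mul_pow, mul_pow]
    ring
  rw [Finset.sum_congr rfl outer, ← Finset.mul_sum, sum_pow_card]
  unfold mu
  have e2 : a + (1 - a) * b = a + b - a * b := by ring
  have e3 : (1 - a) * (1 - b) = 1 - (a + b - a * b) := by ring
  rw [e2, e3]
  ring

lemma union_measure (G : Finset (Finset X)) (a b : ℝ) :
    ∑ W : Finset X, ∑ V : Finset X, mu a W * mu b V * (if W ∪ V ∈ G then 1 else 0)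
      = muF (a + b - a * b) G := by
  classical
  have h1 : ∑ W : Finset X, ∑ V : Finset X, mu a W * mu b V * (if W ∪ V ∈ G then 1 else 0)
      = ∑ q : Finset X × Finset X, mu a q.1 * mu b q.2 * (if q.1 ∪ q.2 ∈ G then 1 else 0) := by
    rw [← Finset.sum_product']
    rfl
  rw [h1]
  have h2 : ∑ q : Finset X × Finset X, mu a q.1 * mu b q.2 * (if q.1 ∪ q.2 ∈ G then 1 else 0)
      = ∑ q ∈ Finset.filter (fun q : Finset X × Finset X => q.1 ∪ q.2 ∈ G) Finset.univ,
          mu a q.1 * mu b q.2 := by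
    rw [Finset.sum_filter]
    refine Finset.sum_congr rfl fun q _ => ?_
    by_cases h : q.1 ∪ q.2 ∈ G <;> simp [h]
  rw [h2]
  have h3 := Finset.sum_fiberwise_of_maps_to
    (s := Finset.filter (fun q : Finset X × Finset X => q.1 ∪ q.2 ∈ G) Finset.univ) (t := G)
    (g := fun q => q.1 ∪ q.2)
    (fun q hq => (Finset.mem_filter.mp hq).2) (fun q => mu a q.1 * mu b q.2)
  rw [← h3]
  unfold muF
  refine Finset.sum_congr rfl fun U hU => ?_
  rw [← mu_union_pair U a b]
  congr 1
  rw [Finset.filter_filter]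
  ext q
  simp only [Finset.mem_filter, Finset.mem_univ, true_and]
  constructor
  · rintro ⟨_, h⟩; exact h
  · intro h; exact ⟨h ▸ hU, h⟩

lemma muF_le_union {G : Finset (Finset X)} (hG : IsUpperFam G) {a b : ℝ}
    (ha0 : 0 ≤ a) (ha1 : a ≤ 1) (hb0 : 0 ≤ b) (hb1 : b ≤ 1) :
    muF b G ≤ muF (a + b - a * b) G := by
  rw [← union_measure G a b]
  have hfil : ∑ V : Finset X, mu b V * (if V ∈ G then 1 else 0) = muF b G := by
    rw [Finset.sum_congr rfl (fun V (_ : V ∈ Finset.univ) => by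
      by_cases h : V ∈ G <;> simp [h] : ∀ V ∈ Finset.univ,
        mu b V * (if V ∈ G then 1 else 0) = if V ∈ G then mu b V else 0)]
    rw [← Finset.sum_filter]
    unfold muF
    congr 1
    simp [Finset.filter_mem_eq_inter]
  have hprod : ∑ W : Finset X, ∑ V : Finset X, mu a W * (mu b V * (if V ∈ G then 1 else 0))
      = muF b G := by
    rw [← Finset.sum_mul_sum, sum_mu_univ, one_mul, hfil]
  calc muF b G = ∑ W : Finset X, ∑ V : Finset X, mu a W * (mu b V * (if V ∈ G then 1 else 0)) :=
        hprod.symm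
    _ ≤ ∑ W : Finset X, ∑ V : Finset X, mu a W * mu b V * (if W ∪ V ∈ G then 1 else 0) := by
        refine Finset.sum_le_sum fun W _ => Finset.sum_le_sum fun V _ => ?_
        rw [← mul_assoc]
        by_cases h : V ∈ G
        · have h2 : W ∪ V ∈ G := hG V h (W ∪ V) Finset.subset_union_right
          simp [h, h2]
        · simp only [h, if_false, mul_zero]
          refine mul_nonneg (mul_nonneg (mu_nonneg ha0 ha1 W) (mu_nonneg hb0 hb1 V)) ?_
          split <;> norm_num
    _ = _ := rfl

lemma muF_mono_p {G : Finset (Finset X)} (hG : IsUpperFam G) {p₁ p₂ : ℝ}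
    (h0 : 0 ≤ p₁) (h12 : p₁ ≤ p₂) (h1 : p₂ ≤ 1) : muF p₁ G ≤ muF p₂ G := by
  by_cases hp1 : p₁ = 1
  · have h2 : p₂ = 1 := le_antisymm h1 (hp1 ▸ h12)
    rw [hp1, h2]
  · have hlt : p₁ < 1 := lt_of_le_of_ne (h12.trans h1) hp1
    set a := (p₂ - p₁) / (1 - p₁) with ha
    have h1p : 0 < 1 - p₁ := by linarith
    have ha0 : 0 ≤ a := div_nonneg (by linarith) h1p.le
    have ha1 : a ≤ 1 := by rw [ha, div_le_one h1p]; linarith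
    have hc := div_mul_cancel₀ (p₂ - p₁) h1p.ne'
    have key : a + p₁ - a * p₁ = p₂ := by rw [ha]; linear_combination hc
    calc muF p₁ G ≤ muF (a + p₁ - a * p₁) G := muF_le_union hG ha0 ha1 h0 (h12.trans h1)
      _ = muF p₂ G := by rw [key]


/-! ### Part 3: minimal elements -/

lemma exists_minimal_subset {H : Finset (Finset X)} {S : Finset X} (hS : S ∈ H) :
    ∃ T ∈ minimalsF H, T ⊆ S := by
  classical
  have hne : (H.filter (· ⊆ S)).Nonempty :=
    ⟨S, Finset.mem_filter.mpr ⟨hS, Finset.Subset.refl S⟩⟩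
  obtain ⟨T, hT, hmin⟩ := Finset.exists_min_image (H.filter (· ⊆ S)) Finset.card hne
  rw [Finset.mem_filter] at hT
  refine ⟨T, ?_, hT.2⟩
  rw [minimalsF, Finset.mem_filter]
  refine ⟨hT.1, fun T' hT' hsub => ?_⟩
  have h1 : T' ∈ H.filter (· ⊆ S) := Finset.mem_filter.mpr ⟨hT', hsub.trans hT.2⟩
  exact Finset.eq_of_subset_of_card_le hsub (hmin T' h1)

lemma cover_of_minimals {H G : Finset (Finset X)} (h : IsCover G (minimalsF H)) :
    IsCover G H := by
  intro S hS
  obtain ⟨T, hT, hTS⟩ := exists_minimal_subset hS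
  obtain ⟨g, hg, hgT⟩ := h T hT
  exact ⟨g, hg, hgT.trans hTS⟩

/-! ### Part 4: fragments, pick, the counting lemma -/

def minf (H : Finset (Finset X)) (W : Finset X) : Finset (Finset X) :=
  minimalsF (H.image (fun S => S \ W))

lemma minf_frag {H : Finset (Finset X)} {W T : Finset X} (hT : T ∈ minf H W) :
    ∃ S ∈ H, T = S \ W := by
  have h1 : T ∈ H.image (fun S => S \ W) := Finset.mem_of_mem_filter T hT
  obtain ⟨S, hS, hST⟩ := Finset.mem_image.mp h1
  exact ⟨S, hS, hST.symm⟩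

lemma minf_disj {H : Finset (Finset X)} {W T : Finset X} (hT : T ∈ minf H W) :
    Disjoint T W := by
  obtain ⟨S, _, rfl⟩ := minf_frag hT
  exact Finset.sdiff_disjoint

lemma minf_min {H : Finset (Finset X)} {W T : Finset X} (hT : T ∈ minf H W)
    {S : Finset X} (hS : S ∈ H) (hsub : S ⊆ W ∪ T) : T ⊆ S := by
  have h1 : S \ W ∈ H.image (fun S => S \ W) := Finset.mem_image_of_mem _ hS
  have h2 : S \ W ⊆ T := by
    intro a ha
    rw [Finset.mem_sdiff] at ha
    rcases Finset.mem_union.mp (hsub ha.1) with h | h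
    · exact absurd h ha.2
    · exact h
  have h3 := (Finset.mem_filter.mp hT).2 (S \ W) h1 h2
  rw [← h3]
  exact Finset.sdiff_subset

noncomputable def pick (H : Finset (Finset X)) (W' : Finset X) : Finset X :=
  if h : (H.filter (· ⊆ W')).Nonempty then h.choose else ∅

lemma pick_spec {H : Finset (Finset X)} {W' : Finset X} (h : ∃ S ∈ H, S ⊆ W') :
    pick H W' ∈ H ∧ pick H W' ⊆ W' := by
  obtain ⟨S, hS, hSW⟩ := h
  have hne : (H.filter (· ⊆ W')).Nonempty := ⟨S, Finset.mem_filter.mpr ⟨hS, hSW⟩⟩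
  rw [pick, dif_pos hne]
  have := hne.choose_spec
  rw [Finset.mem_filter] at this
  exact this

lemma pick_card_le {H : Finset (Finset X)} {m : ℕ} (hm : ∀ S ∈ H, S.card ≤ m)
    (W' : Finset X) : (pick H W').card ≤ m := by
  rw [pick]
  split
  · next h =>
      have := h.choose_spec
      rw [Finset.mem_filter] at this
      exact hm _ this.1
  · simpa using Nat.zero_le m

lemma mu_sdiff {σ : ℝ} (hσ0 : 0 < σ) {T W' : Finset X} (hTW : T ⊆ W') :
    mu σ (W' \ T) = mu σ W' * ((1 - σ) / σ) ^ T.card := by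
  have hc : (W' \ T).card = W'.card - T.card := Finset.card_sdiff_of_subset hTW
  have ht : T.card ≤ W'.card := Finset.card_le_card hTW
  have hn : W'.card ≤ Fintype.card X := Finset.card_le_card (Finset.subset_univ W')
  unfold mu
  rw [hc]
  have e1 : Fintype.card X - (W'.card - T.card) = (Fintype.card X - W'.card) + T.card := by omega
  rw [e1, pow_add, pow_sub₀ σ hσ0.ne' ht, div_pow]
  rw [div_eq_mul_inv]
  ring

lemma sum_powerset_filter_card (s : Finset X) (t₀ m : ℕ) (hs : s.card ≤ m) {z : ℝ}
    (hz : 0 ≤ z) :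
    ∑ T ∈ s.powerset.filter (fun T => t₀ ≤ T.card), z ^ T.card
      ≤ ∑ t ∈ Finset.Icc t₀ m, (m.choose t : ℝ) * z ^ t := by
  classical
  have hmap : ∀ T ∈ s.powerset.filter (fun T => t₀ ≤ T.card), T.card ∈ Finset.Icc t₀ s.card := by
    intro T hT
    rw [Finset.mem_filter, Finset.mem_powerset] at hT
    exact Finset.mem_Icc.mpr ⟨hT.2, Finset.card_le_card hT.1⟩
  have h1 := Finset.sum_fiberwise_of_maps_to hmap (fun T => z ^ T.card)
  rw [← h1]
  have h2 : ∀ t ∈ Finset.Icc t₀ s.card,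
      ∑ T ∈ (s.powerset.filter (fun T => t₀ ≤ T.card)).filter (fun T => T.card = t), z ^ T.card
      = (s.card.choose t : ℝ) * z ^ t := by
    intro t ht
    rw [Finset.mem_Icc] at ht
    have hset : (s.powerset.filter (fun T => t₀ ≤ T.card)).filter (fun T => T.card = t)
        = s.powersetCard t := by
      ext T
      rw [Finset.filter_filter, Finset.mem_filter, Finset.mem_powerset,
        Finset.mem_powersetCard]
      constructor
      · rintro ⟨h1, _, h3⟩; exact ⟨h1, h3⟩
      · rintro ⟨h1, h2⟩; exact ⟨h1, h2 ▸ ht.1, h2⟩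
    rw [hset]
    rw [Finset.sum_congr rfl (fun T hT => by
      rw [(Finset.mem_powersetCard.mp hT).2] : ∀ T ∈ s.powersetCard t, z ^ T.card = z ^ t)]
    rw [Finset.sum_const, Finset.card_powersetCard, nsmul_eq_mul]
  rw [Finset.sum_congr rfl h2]
  have hsub : Finset.Icc t₀ s.card ⊆ Finset.Icc t₀ m := by
    intro t ht
    rw [Finset.mem_Icc] at *
    exact ⟨ht.1, ht.2.trans hs⟩
  refine le_trans (Finset.sum_le_sum_of_subset_of_nonneg hsub (fun t _ _ => by positivity)) ?_
  refine Finset.sum_le_sum fun t ht => ?_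
  have hcc : (s.card.choose t : ℝ) ≤ (m.choose t : ℝ) := by
    exact_mod_cast Nat.choose_le_choose t hs
  have hzt : (0:ℝ) ≤ z ^ t := by positivity
  nlinarith

lemma counting (H : Finset (Finset X)) (m t₀ : ℕ) (hm : ∀ S ∈ H, S.card ≤ m)
    (ht₀ : 1 ≤ t₀) {σ y : ℝ} (hσ0 : 0 < σ) (hσ1 : σ ≤ 1) (hy : 0 ≤ y) :
    ∑ W : Finset X, mu σ W * ∑ T ∈ (minf H W).filter (fun T => t₀ ≤ T.card), y ^ T.card
      ≤ ∑ t ∈ Finset.Icc t₀ m, (m.choose t : ℝ) * (y * ((1 - σ) / σ)) ^ t := by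
  classical
  set z : ℝ := y * ((1 - σ) / σ) with hzdef
  have hz : 0 ≤ z := by
    apply mul_nonneg hy
    apply div_nonneg (by linarith) hσ0.le
  -- domain and codomain sigma sets
  set D : Finset ((_ : Finset X) × Finset X) :=
    Finset.univ.sigma (fun W => (minf H W).filter (fun T => t₀ ≤ T.card)) with hD
  set E : Finset ((_ : Finset X) × Finset X) :=
    Finset.univ.sigma (fun W' => ((pick H W').powerset).filter
      (fun T => t₀ ≤ T.card ∧ T ⊆ W')) with hE
  have hLHS : ∑ W : Finset X, mu σ W * ∑ T ∈ (minf H W).filter (fun T => t₀ ≤ T.card), y ^ T.card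
      = ∑ x ∈ D, mu σ x.1 * y ^ x.2.card := by
    rw [hD, Finset.sum_sigma]
    exact Finset.sum_congr rfl fun W _ => Finset.mul_sum _ _ _
  rw [hLHS]
  -- the injection
  have hphi : ∀ x ∈ D, (⟨x.1 ∪ x.2, x.2⟩ : (_ : Finset X) × Finset X) ∈ E := by
    rintro ⟨W, T⟩ hx
    rw [hD, Finset.mem_sigma, Finset.mem_filter] at hx
    obtain ⟨-, hTm, hTc⟩ := hx
    dsimp only at hTm hTc
    obtain ⟨S, hS, hTS⟩ := minf_frag hTm
    have hSsub : S ⊆ W ∪ T := by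
      rw [hTS]
      intro a ha
      by_cases h : a ∈ W
      · exact Finset.mem_union_left _ h
      · exact Finset.mem_union_right _ (Finset.mem_sdiff.mpr ⟨ha, h⟩)
    have hex : ∃ S' ∈ H, S' ⊆ W ∪ T := ⟨S, hS, hSsub⟩
    have hpick := pick_spec hex
    have hTpick : T ⊆ pick H (W ∪ T) := minf_min hTm hpick.1 hpick.2
    rw [hE, Finset.mem_sigma, Finset.mem_filter, Finset.mem_powerset]
    exact ⟨Finset.mem_univ _, hTpick, hTc, Finset.subset_union_right⟩
  have hinj : ∀ x ∈ D, ∀ x' ∈ D,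
      (⟨x.1 ∪ x.2, x.2⟩ : (_ : Finset X) × Finset X) = ⟨x'.1 ∪ x'.2, x'.2⟩ → x = x' := by
    rintro ⟨W, T⟩ hx ⟨W', T'⟩ hx' heq
    rw [hD, Finset.mem_sigma, Finset.mem_filter] at hx hx'
    have hT : T = T' := by
      have := congrArg (fun s : ((_ : Finset X) × Finset X) => s.2) heq
      simpa using this
    subst hT
    have hU : W ∪ T = W' ∪ T := by
      have := congrArg (fun s : ((_ : Finset X) × Finset X) => s.1) heq
      simpa using this
    have d1 : Disjoint T W := minf_disj hx.2.1
    have d2 : Disjoint T W' := minf_disj hx'.2.1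
    have : W = W' := by
      have e1 : (W ∪ T) \ T = W := by
        rw [Finset.union_sdiff_right, Finset.sdiff_eq_self_of_disjoint d1.symm]
      have e2 : (W' ∪ T) \ T = W' := by
        rw [Finset.union_sdiff_right, Finset.sdiff_eq_self_of_disjoint d2.symm]
      rw [← e1, ← e2, hU]
    subst this
    rfl
  have hval : ∀ x ∈ D, mu σ x.1 * y ^ x.2.card
      = mu σ ((x.1 ∪ x.2) \ x.2) * y ^ x.2.card := by
    rintro ⟨W, T⟩ hx
    rw [hD, Finset.mem_sigma, Finset.mem_filter] at hx
    have d1 : Disjoint T W := minf_disj hx.2.1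
    have e1 : (W ∪ T) \ T = W := by
      rw [Finset.union_sdiff_right, Finset.sdiff_eq_self_of_disjoint d1.symm]
    rw [e1]
  -- bound sum over D by sum over E
  have hDle : ∑ x ∈ D, mu σ x.1 * y ^ x.2.card
      ≤ ∑ x ∈ E, mu σ (x.1 \ x.2) * y ^ x.2.card := by
    rw [Finset.sum_congr rfl hval]
    have himg : ∑ x ∈ D, mu σ ((x.1 ∪ x.2) \ x.2) * y ^ x.2.card
        = ∑ x ∈ D.image (fun x : (_ : Finset X) × Finset X => (⟨x.1 ∪ x.2, x.2⟩ : (_ : Finset X) × Finset X)),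
            mu σ (x.1 \ x.2) * y ^ x.2.card := by
      rw [Finset.sum_image hinj]
    rw [himg]
    refine Finset.sum_le_sum_of_subset_of_nonneg ?_ (fun x _ _ => ?_)
    · intro x hx
      obtain ⟨d, hd, rfl⟩ := Finset.mem_image.mp hx
      exact hphi d hd
    · exact mul_nonneg (mu_nonneg hσ0.le hσ1 _) (by positivity)
  refine hDle.trans ?_
  -- compute sum over E
  have hEsum : ∑ x ∈ E, mu σ (x.1 \ x.2) * y ^ x.2.card
      = ∑ W' : Finset X, ∑ T ∈ ((pick H W').powerset).filter (fun T => t₀ ≤ T.card ∧ T ⊆ W'),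
          mu σ (W' \ T) * y ^ T.card := by
    rw [hE, Finset.sum_sigma]
  rw [hEsum]
  have hB : ∀ W' : Finset X,
      ∑ T ∈ ((pick H W').powerset).filter (fun T => t₀ ≤ T.card ∧ T ⊆ W'),
          mu σ (W' \ T) * y ^ T.card
      ≤ mu σ W' * ∑ t ∈ Finset.Icc t₀ m, (m.choose t : ℝ) * z ^ t := by
    intro W'
    have step1 : ∀ T ∈ ((pick H W').powerset).filter (fun T => t₀ ≤ T.card ∧ T ⊆ W'),
        mu σ (W' \ T) * y ^ T.card = mu σ W' * z ^ T.card := by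
      intro T hT
      rw [Finset.mem_filter] at hT
      rw [mu_sdiff hσ0 hT.2.2, hzdef, mul_pow]
      ring
    rw [Finset.sum_congr rfl step1, ← Finset.mul_sum]
    have hmuW : 0 ≤ mu σ W' := mu_nonneg hσ0.le hσ1 _
    refine mul_le_mul_of_nonneg_left ?_ hmuW
    have hsub2 : ((pick H W').powerset).filter (fun T => t₀ ≤ T.card ∧ T ⊆ W')
        ⊆ ((pick H W').powerset).filter (fun T => t₀ ≤ T.card) := by
      intro T hT
      rw [Finset.mem_filter] at *
      exact ⟨hT.1, hT.2.1⟩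
    refine (Finset.sum_le_sum_of_subset_of_nonneg hsub2 (fun T _ _ => by positivity)).trans ?_
    exact sum_powerset_filter_card _ t₀ m (pick_card_le hm W') hz
  refine (Finset.sum_le_sum fun W' _ => hB W').trans ?_
  rw [← Finset.sum_mul, sum_mu_univ, one_mul]

/-! ### Part 5: levels, step function, invariant -/

open scoped Classical

def wt (q' : ℝ) (G : Finset (Finset X)) : ℝ := ∑ T ∈ G, q' ^ T.card

lemma wt_nonneg {q' : ℝ} (hq : 0 ≤ q') (G : Finset (Finset X)) : 0 ≤ wt q' G :=
  Finset.sum_nonneg fun T _ => pow_nonneg hq _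

lemma wt_union_le {q' : ℝ} (hq : 0 ≤ q') (G B : Finset (Finset X)) :
    wt q' (G ∪ B) ≤ wt q' G + wt q' B := by
  have h := Finset.sum_union_inter (s₁ := G) (s₂ := B) (f := fun T => q' ^ T.card)
  have h2 : 0 ≤ wt q' (G ∩ B) := wt_nonneg hq _
  unfold wt at *
  linarith

def notSmall (q' c : ℝ) (H : Finset (Finset X)) : Prop :=
  ∀ G : Finset (Finset X), IsCover G H → c < wt q' G

def jlev (m : ℕ) : ℕ := if m = 0 then 0 else Nat.log 2 m + 1

noncomputable def clev (m : ℕ) : ℝ := 1/2 - (1/2)^(jlev m + 1)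

lemma jlev_zero : jlev 0 = 0 := rfl

lemma jlev_pos {m : ℕ} (hm : 1 ≤ m) : 1 ≤ jlev m := by
  unfold jlev
  rw [if_neg (by omega)]
  omega

lemma jlev_half {m : ℕ} (hm : 1 ≤ m) : jlev (m / 2) = jlev m - 1 := by
  unfold jlev
  rcases Nat.lt_or_ge m 2 with h | h
  · have : m = 1 := by omega
    subst this
    norm_num
  · have h1 : m / 2 ≠ 0 := by omega
    have h2 : m ≠ 0 := by omega
    rw [if_neg h1, if_neg h2, Nat.log_div_base 2 m]
    have hp : 0 < Nat.log 2 m := Nat.log_pos (by norm_num) h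
    omega

lemma clev_zero : clev 0 = 0 := by
  unfold clev jlev
  norm_num

lemma clev_le_half (m : ℕ) : clev m ≤ 1/2 := by
  unfold clev
  have : (0:ℝ) ≤ (1/2)^(jlev m + 1) := by positivity
  linarith

lemma clev_nonneg (m : ℕ) : 0 ≤ clev m := by
  unfold clev
  have h1 : ((1:ℝ)/2)^(jlev m + 1) ≤ (1/2)^1 := by
    apply pow_le_pow_of_le_one (by norm_num) (by norm_num)
    omega
  rw [pow_one] at h1
  linarith

lemma clev_half {m : ℕ} (hm : 1 ≤ m) : clev (m / 2) = clev m - (1/2)^(jlev m + 1) := by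
  unfold clev
  rw [jlev_half hm]
  have hj := jlev_pos hm
  have e1 : jlev m - 1 + 1 = jlev m := by omega
  rw [e1]
  have e2 : ((1:ℝ)/2)^(jlev m + 1) = (1/2)^(jlev m) * (1/2) := by rw [pow_succ]
  rw [e2]
  ring

noncomputable def stepState (q' : ℝ) (s : Finset (Finset X) × ℕ) (W : Finset X) :
    Finset (Finset X) × ℕ :=
  if wt q' ((minf s.1 W).filter (fun T => s.2 / 2 < T.card)) ≤ (1/2)^(jlev s.2 + 1)
  then ((minf s.1 W).filter (fun T => T.card ≤ s.2 / 2), s.2 / 2)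
  else (minf s.1 W, s.2)

def Inv (q' : ℝ) (s : Finset (Finset X) × ℕ) : Prop :=
  (∀ S ∈ s.1, S.card ≤ s.2) ∧ notSmall q' (clev s.2) s.1

lemma nonempty_of_notSmall {q' c : ℝ} {H : Finset (Finset X)} (h : notSmall q' c H)
    (hc : 0 ≤ c) : H.Nonempty := by
  by_contra h'
  rw [Finset.not_nonempty_iff_eq_empty] at h'
  have h2 := h ∅ (by intro S hS; rw [h'] at hS; exact absurd hS (Finset.notMem_empty S))
  have h3 : wt q' (∅ : Finset (Finset X)) = 0 := Finset.sum_empty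
  rw [h3] at h2
  linarith

lemma inv_zero {q' : ℝ} {H : Finset (Finset X)} (h : Inv q' (H, 0)) : H = {∅} := by
  obtain ⟨hsize, hns⟩ := h
  have hne : H.Nonempty := nonempty_of_notSmall hns (by rw [clev_zero])
  rw [Finset.eq_singleton_iff_nonempty_unique_mem]
  refine ⟨hne, fun S hS => ?_⟩
  have := hsize S hS
  rw [Nat.le_zero, Finset.card_eq_zero] at this
  exact this

lemma cover_lift {H G : Finset (Finset X)} {W : Finset X}
    (hG : IsCover G (minf H W)) : IsCover G H := by
  intro S hS
  have h1 : S \ W ∈ H.image (fun S => S \ W) := Finset.mem_image_of_mem _ hS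
  obtain ⟨T, hT, hTsub⟩ := exists_minimal_subset h1
  obtain ⟨g, hg, hgT⟩ := hG T hT
  exact ⟨g, hg, hgT.trans (hTsub.trans Finset.sdiff_subset)⟩


lemma step_zero {q' : ℝ} {H : Finset (Finset X)} (h : Inv q' (H, 0)) (W : Finset X) :
    stepState q' (H, 0) W = (H, 0) := by
  have hH := inv_zero h
  subst hH
  have hminf : minf ({∅} : Finset (Finset X)) W = {∅} := by
    unfold minf
    have himg : ({∅} : Finset (Finset X)).image (fun S => S \ W) = {∅} := by
      rw [Finset.image_singleton, Finset.empty_sdiff]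
    rw [himg]
    unfold minimalsF
    rw [Finset.filter_singleton, if_pos]
    intro T hT hsub
    rw [Finset.mem_singleton] at hT
    exact hT
  unfold stepState
  dsimp only
  rw [hminf]
  have hbig : ({∅} : Finset (Finset X)).filter (fun T => 0 / 2 < T.card) = ∅ := by
    rw [Finset.filter_singleton, if_neg (by simp)]
  have hsmallf : ({∅} : Finset (Finset X)).filter (fun T => T.card ≤ 0 / 2) = {∅} := by
    rw [Finset.filter_singleton, if_pos (by simp)]
  rw [hbig, hsmallf]
  rw [if_pos (by rw [show wt q' (∅ : Finset (Finset X)) = 0 from Finset.sum_empty]; positivity)]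

lemma step_inv {q' : ℝ} (hq0 : 0 ≤ q') {s : Finset (Finset X) × ℕ} (h : Inv q' s)
    (W : Finset X) : Inv q' (stepState q' s W) := by
  obtain ⟨H, m⟩ := s
  rcases Nat.eq_zero_or_pos m with hm | hm
  · subst hm
    rw [step_zero h W]
    exact h
  obtain ⟨hsize, hns⟩ := h
  unfold stepState
  dsimp only at *
  split
  · -- descend
    next hcond =>
    constructor
    · intro S hS
      exact (Finset.mem_filter.mp hS).2
    · intro G hG
      set B := (minf H W).filter (fun T => m / 2 < T.card) with hB
      have hcover : IsCover (G ∪ B) (minf H W) := by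
        intro T hT
        by_cases hc : T.card ≤ m / 2
        · obtain ⟨g, hg, hgT⟩ := hG T (Finset.mem_filter.mpr ⟨hT, hc⟩)
          exact ⟨g, Finset.mem_union_left _ hg, hgT⟩
        · exact ⟨T, Finset.mem_union_right _ (Finset.mem_filter.mpr ⟨hT, by omega⟩),
            Finset.Subset.refl T⟩
      have h1 := hns (G ∪ B) (cover_lift hcover)
      have h2 := wt_union_le hq0 G B
      have h3 := clev_half hm
      linarith
  · -- stay
    next hcond =>
    constructor
    · intro T hT
      obtain ⟨S, hS, rfl⟩ := minf_frag hT
      exact le_trans (Finset.card_le_card Finset.sdiff_subset) (hsize S hS)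
    · intro G hG
      exact hns G (cover_lift hG)

/-! ### Part 5b: the numeric Lemma A -/

lemma choose_le_two_pow (m t : ℕ) : m.choose t ≤ 2 ^ m := by
  rcases le_or_gt t m with h | h
  · calc m.choose t ≤ ∑ i ∈ Finset.range (m+1), m.choose i :=
        Finset.single_le_sum (fun i _ => Nat.zero_le _) (Finset.mem_range.mpr (by omega))
      _ = 2 ^ m := Nat.sum_range_choose m
  · rw [Nat.choose_eq_zero_of_lt h]
    exact Nat.zero_le _

lemma geom_tail_le {x : ℝ} (hx0 : 0 ≤ x) (hx : x ≤ 1/16) (a b : ℕ) :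
    ∑ t ∈ Finset.Icc a b, x ^ t ≤ x ^ a * (16/15) := by
  have hx1 : x < 1 := by linarith
  rcases le_or_gt a b with hab | hab
  · rw [← Finset.Ico_add_one_right_eq_Icc, Finset.sum_Ico_eq_sum_range]
    have h1 : ∀ i ∈ Finset.range (b + 1 - a), x ^ (a + i) = x ^ a * x ^ i := fun i _ => pow_add x a i
    rw [Finset.sum_congr rfl h1, ← Finset.mul_sum]
    have h2 : ∑ i ∈ Finset.range (b + 1 - a), x ^ i ≤ 16/15 := by
      have h3 := geom_sum_mul x (b + 1 - a)
      have h4 : (0:ℝ) ≤ x ^ (b + 1 - a) := by positivity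
      nlinarith [Finset.sum_nonneg (fun i (_ : i ∈ Finset.range (b + 1 - a)) =>
        pow_nonneg hx0 i)]
    have h5 : (0:ℝ) ≤ x ^ a := by positivity
    nlinarith
  · rw [Finset.Icc_eq_empty (by omega)]
    simp
    positivity

lemma nat_lt_two_pow_sub_two {m : ℕ} (hm : 5 ≤ m) : m < 2 ^ (m - 2) := by
  induction m with
  | zero => omega
  | succ n ih =>
    rcases Nat.lt_or_ge n 5 with h | h
    · interval_cases n <;> first | omega | norm_num
    · have h1 := ih (by omega)
      have h2 : n + 1 - 2 = (n - 2) + 1 := by omega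
      rw [h2, pow_succ]
      have h3 : 1 ≤ 2 ^ (n - 2) := Nat.one_le_two_pow
      omega

lemma nat_key_ineq {m : ℕ} (hm : 4 ≤ m) : m + Nat.log 2 m + 1 ≤ 4 * (m / 2) := by
  rcases Nat.even_or_odd m with he | ho
  · obtain ⟨k, hk⟩ := he
    have h1 : Nat.log 2 m < m := Nat.log_lt_self 2 (by omega)
    omega
  · obtain ⟨k, hk⟩ := ho
    have hm5 : 5 ≤ m := by omega
    have h1 : m < 2 ^ (m - 2) := nat_lt_two_pow_sub_two hm5
    have h2 : Nat.log 2 m < m - 2 := by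
      apply Nat.log_lt_of_lt_pow (by omega) h1
    omega

lemma lemA (m : ℕ) (hm : 1 ≤ m) {x : ℝ} (hx0 : 0 ≤ x) (hx : x ≤ 1/16) :
    ∑ t ∈ Finset.Icc (m / 2 + 1) m, (m.choose t : ℝ) * x ^ t
      ≤ (1/2) ^ (Nat.log 2 m + 4) := by
  rcases Nat.lt_or_ge m 4 with hsmall | hbig4
  · interval_cases m
    · -- m = 1
      have : Finset.Icc 1 1 = {1} := Finset.Icc_self 1
      rw [this]
      have hl : Nat.log 2 1 = 0 := by norm_num
      rw [hl]
      simp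
      linarith
    · -- m = 2
      have : Finset.Icc 2 2 = {2} := Finset.Icc_self 2
      rw [this]
      have hl : Nat.log 2 2 = 1 :=
        Nat.log_eq_of_pow_le_of_lt_pow (by norm_num) (by norm_num)
      rw [hl]
      simp
      nlinarith
    · -- m = 3
      have h23 : Finset.Icc 2 3 = {2, 3} := by decide
      rw [h23]
      have hl : Nat.log 2 3 = 1 :=
        Nat.log_eq_of_pow_le_of_lt_pow (by norm_num) (by norm_num)
      rw [hl]
      rw [Finset.sum_insert (by decide), Finset.sum_singleton]
      norm_num [Nat.choose]
      nlinarith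
  · -- m ≥ 4
    have step1 : ∑ t ∈ Finset.Icc (m / 2 + 1) m, (m.choose t : ℝ) * x ^ t
        ≤ (2:ℝ) ^ m * ∑ t ∈ Finset.Icc (m / 2 + 1) m, x ^ t := by
      rw [Finset.mul_sum]
      refine Finset.sum_le_sum fun t _ => ?_
      have h1 : (m.choose t : ℝ) ≤ (2:ℝ)^m := by
        exact_mod_cast choose_le_two_pow m t
      have h2 : (0:ℝ) ≤ x ^ t := by positivity
      nlinarith
    have step2 := geom_tail_le hx0 hx (m / 2 + 1) m
    have step3 : x ^ (m / 2 + 1) ≤ (1/16:ℝ) ^ (m / 2 + 1) :=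
      pow_le_pow_left₀ hx0 hx _
    have hxp : (0:ℝ) ≤ x ^ (m/2+1) := by positivity
    have h2m : (0:ℝ) ≤ (2:ℝ)^m := by positivity
    have step4 : ∑ t ∈ Finset.Icc (m / 2 + 1) m, (m.choose t : ℝ) * x ^ t
        ≤ (2:ℝ)^m * ((1/16:ℝ)^(m/2+1) * (16/15)) := by
      calc ∑ t ∈ Finset.Icc (m / 2 + 1) m, (m.choose t : ℝ) * x ^ t
          ≤ (2:ℝ) ^ m * ∑ t ∈ Finset.Icc (m / 2 + 1) m, x ^ t := step1
        _ ≤ (2:ℝ) ^ m * (x ^ (m/2+1) * (16/15)) := by nlinarith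
        _ ≤ (2:ℝ)^m * ((1/16:ℝ)^(m/2+1) * (16/15)) := by nlinarith
    refine step4.trans ?_
    -- pure power inequality
    have key : m + Nat.log 2 m + 1 ≤ 4 * (m / 2) := nat_key_ineq hbig4
    set j := Nat.log 2 m with hj
    set r := 4 * (m / 2) - m - j with hr
    have hr1 : 1 ≤ r := by omega
    have hsplit : 4 * (m / 2 + 1) = m + ((j + 4) + r) := by omega
    have e16 : ((1:ℝ)/16)^(m/2+1) = (1/2)^(4*(m/2+1)) := by
      have h16 : ((1:ℝ)/16) = (1/2)^4 := by norm_num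
      rw [h16, ← pow_mul]
    have hcan : ∀ s : ℕ, (2:ℝ)^m * (1/2)^(m+s) = (1/2)^s := by
      intro s
      rw [pow_add, ← mul_assoc, ← mul_pow]
      norm_num
    have e2 : (2:ℝ)^m * ((1/16:ℝ)^(m/2+1)*(16/15)) = (1/2)^((j+4)+r) * (16/15) := by
      rw [e16, hsplit, ← mul_assoc, hcan ((j+4)+r)]
    rw [e2, pow_add]
    have hC : (0:ℝ) ≤ (1/2:ℝ)^(j+4) := by positivity
    have hhalf : ((1:ℝ)/2)^r ≤ 1/2 := by
      calc ((1:ℝ)/2)^r ≤ (1/2)^1 := pow_le_pow_of_le_one (by norm_num) (by norm_num) hr1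
        _ = 1/2 := pow_one _
    have hD : (0:ℝ) ≤ (1/2:ℝ)^r := by positivity
    nlinarith [mul_nonneg hC (sub_nonneg.mpr hhalf)]

/-! ### Part 6: stay probability, fail recursion, Tail bound -/

lemma stay_prob {q' σ : ℝ} (hq0 : 0 ≤ q') {H : Finset (Finset X)} {m : ℕ}
    (hsize : ∀ S ∈ H, S.card ≤ m) (hm : 1 ≤ m)
    (hσ0 : 0 < σ) (hσ1 : σ ≤ 1) (hx : q' * ((1 - σ) / σ) ≤ 1/16) :
    ∑ W ∈ Finset.univ.filter (fun W : Finset X =>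
        ¬ wt q' ((minf H W).filter (fun T => m / 2 < T.card)) ≤ (1/2)^(jlev m + 1)),
      mu σ W ≤ 1/4 := by
  set δ : ℝ := (1/2)^(jlev m + 1) with hδ
  have hδ0 : (0:ℝ) < δ := by rw [hδ]; positivity
  have hbw0 : ∀ W : Finset X,
      0 ≤ wt q' ((minf H W).filter (fun T => m / 2 < T.card)) :=
    fun W => wt_nonneg hq0 _
  have markov : (∑ W ∈ Finset.univ.filter (fun W : Finset X =>
        ¬ wt q' ((minf H W).filter (fun T => m / 2 < T.card)) ≤ δ), mu σ W) * δ
      ≤ ∑ W : Finset X, mu σ W * wt q' ((minf H W).filter (fun T => m / 2 < T.card)) := by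
    rw [Finset.sum_mul]
    calc ∑ W ∈ Finset.univ.filter (fun W : Finset X =>
          ¬ wt q' ((minf H W).filter (fun T => m / 2 < T.card)) ≤ δ), mu σ W * δ
        ≤ ∑ W ∈ Finset.univ.filter (fun W : Finset X =>
          ¬ wt q' ((minf H W).filter (fun T => m / 2 < T.card)) ≤ δ),
            mu σ W * wt q' ((minf H W).filter (fun T => m / 2 < T.card)) := by
          refine Finset.sum_le_sum fun W hW => ?_
          have h1 := (Finset.mem_filter.mp hW).2
          push_neg at h1
          exact mul_le_mul_of_nonneg_left h1.le (mu_nonneg hσ0.le hσ1 W)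
      _ ≤ ∑ W : Finset X, mu σ W * wt q' ((minf H W).filter (fun T => m / 2 < T.card)) :=
          Finset.sum_le_sum_of_subset_of_nonneg (Finset.filter_subset _ _)
            (fun W _ _ => mul_nonneg (mu_nonneg hσ0.le hσ1 W) (hbw0 W))
  have hfil : ∀ W : Finset X, (minf H W).filter (fun T => m / 2 < T.card)
      = (minf H W).filter (fun T => m / 2 + 1 ≤ T.card) := by
    intro W
    apply Finset.filter_congr
    intro T _
    constructor
    · intro h; omega
    · intro h; omega
  have hcnt : ∑ W : Finset X, mu σ W * wt q' ((minf H W).filter (fun T => m / 2 < T.card))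
      ≤ ∑ t ∈ Finset.Icc (m/2+1) m, (m.choose t : ℝ) * (q' * ((1-σ)/σ))^t := by
    have hc := counting H m (m/2+1) hsize (by omega) hσ0 hσ1 hq0
    calc ∑ W : Finset X, mu σ W * wt q' ((minf H W).filter (fun T => m / 2 < T.card))
        = ∑ W : Finset X, mu σ W *
            ∑ T ∈ (minf H W).filter (fun T => m/2+1 ≤ T.card), q' ^ T.card := by
          refine Finset.sum_congr rfl fun W _ => ?_
          rw [hfil W]
          rfl
      _ ≤ _ := hc
  have hA := lemA m hm (x := q' * ((1-σ)/σ))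
    (mul_nonneg hq0 (div_nonneg (by linarith) hσ0.le)) hx
  have hquarter : (1/2:ℝ)^(Nat.log 2 m + 4) = (1/4) * δ := by
    rw [hδ]
    unfold jlev
    rw [if_neg (by omega)]
    have e : Nat.log 2 m + 4 = (Nat.log 2 m + 1 + 1) + 2 := by omega
    rw [e, pow_add]
    ring
  have hfin : (∑ W ∈ Finset.univ.filter (fun W : Finset X =>
      ¬ wt q' ((minf H W).filter (fun T => m / 2 < T.card)) ≤ δ), mu σ W) * δ
      ≤ (1/4) * δ := by
    rw [← hquarter]
    exact markov.trans (hcnt.trans hA)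
  have := (mul_le_mul_iff_left₀ hδ0).mp hfin
  exact this

noncomputable def failP (q' σ : ℝ) : ℕ → Finset (Finset X) × ℕ → ℝ
  | 0, s => if s.2 = 0 then 0 else 1
  | (k+1), s => ∑ W : Finset X, mu σ W * failP q' σ k (stepState q' s W)

lemma step_snd (q' : ℝ) (s : Finset (Finset X) × ℕ) (W : Finset X) :
    (stepState q' s W).2 = s.2 / 2 ∨ (stepState q' s W).2 = s.2 := by
  unfold stepState
  split
  · exact Or.inl rfl
  · exact Or.inr rfl

lemma failP_level0 (q' σ : ℝ) :
    ∀ (k : ℕ) (s : Finset (Finset X) × ℕ), s.2 = 0 → failP q' σ k s = 0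
  | 0, s, h => by simp [failP, h]
  | (k+1), s, h => by
    show (∑ W : Finset X, mu σ W * failP q' σ k (stepState q' s W)) = 0
    have hz : ∀ W : Finset X, failP q' σ k (stepState q' s W) = 0 := by
      intro W
      rcases step_snd q' s W with h2 | h2 <;>
        exact failP_level0 q' σ k _ (by omega)
    simp [hz]

noncomputable def TailB (k j : ℕ) : ℝ :=
  ∑ i ∈ Finset.range j, (k.choose i : ℝ) * (1/4)^(k - i)

lemma TailB_nonneg (k j : ℕ) : 0 ≤ TailB k j :=
  Finset.sum_nonneg fun i _ => by positivity

lemma TailB_mono (k : ℕ) {j j' : ℕ} (h : j ≤ j') : TailB k j ≤ TailB k j' :=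
  Finset.sum_le_sum_of_subset_of_nonneg (Finset.range_subset_range.mpr h)
    (fun i _ _ => by positivity)

lemma one_le_TailB_zero {j : ℕ} (hj : 1 ≤ j) : 1 ≤ TailB 0 j := by
  unfold TailB
  have h := Finset.single_le_sum (f := fun i => ((0:ℕ).choose i : ℝ) * (1/4)^(0 - i))
    (fun i _ => by positivity) (Finset.mem_range.mpr hj)
  simpa using h

lemma TailB_succ (k j : ℕ) : TailB (k+1) (j+1) = (1/4) * TailB k (j+1) + TailB k j := by
  unfold TailB
  have e1 : ∀ i : ℕ, (1/4:ℝ) * ((k.choose i : ℝ) * (1/4)^(k-i))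
      = (k.choose i : ℝ) * (1/4:ℝ)^(k+1-i) := by
    intro i
    by_cases h : i ≤ k
    · have e : k + 1 - i = (k - i) + 1 := by omega
      rw [e, pow_succ]
      ring
    · have h0 : k.choose i = 0 := Nat.choose_eq_zero_of_lt (by omega)
      simp [h0]
  rw [Finset.mul_sum, Finset.sum_congr rfl (fun i (_ : i ∈ Finset.range (j+1)) => e1 i)]
  rw [Finset.sum_range_succ' (fun i => (((k+1).choose i : ℝ)) * (1/4:ℝ)^(k+1-i)) j]
  rw [Finset.sum_range_succ' (fun i => ((k.choose i : ℝ)) * (1/4:ℝ)^(k+1-i)) j]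
  have e3 : ∀ i ∈ Finset.range j, (((k+1).choose (i+1) : ℝ)) * (1/4:ℝ)^(k+1-(i+1))
      = (k.choose (i+1) : ℝ) * (1/4)^(k+1-(i+1)) + (k.choose i : ℝ) * (1/4)^(k-i) := by
    intro i _
    have hcs : (k+1).choose (i+1) = k.choose i + k.choose (i+1) := Nat.choose_succ_succ k i
    have he : k + 1 - (i+1) = k - i := by omega
    rw [hcs, he]
    push_cast
    ring
  rw [Finset.sum_congr rfl e3, Finset.sum_add_distrib]
  simp only [Nat.choose_zero_right, Nat.cast_one, one_mul]
  ring

lemma failP_le_TailB {q' σ : ℝ} (hq0 : 0 ≤ q') (hσ0 : 0 < σ) (hσ1 : σ ≤ 1)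
    (hx : q' * ((1 - σ) / σ) ≤ 1/16) :
    ∀ (k : ℕ) (s : Finset (Finset X) × ℕ), Inv q' s → failP q' σ k s ≤ TailB k (jlev s.2) := by
  intro k
  induction k with
  | zero =>
    intro s hInv
    by_cases h : s.2 = 0
    · show (if s.2 = 0 then (0:ℝ) else 1) ≤ _
      rw [if_pos h]
      exact TailB_nonneg _ _
    · show (if s.2 = 0 then (0:ℝ) else 1) ≤ _
      rw [if_neg h]
      exact one_le_TailB_zero (jlev_pos (by omega))
  | succ k ih =>
    intro s hInv
    obtain ⟨H, m⟩ := s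
    by_cases hm : m = 0
    · subst hm
      rw [failP_level0 q' σ _ _ rfl]
      exact TailB_nonneg _ _
    have hm1 : 1 ≤ m := by omega
    have hj1 : 1 ≤ jlev m := jlev_pos hm1
    show (∑ W : Finset X, mu σ W * failP q' σ k (stepState q' (H, m) W)) ≤ TailB (k+1) (jlev m)
    rw [← Finset.sum_filter_add_sum_filter_not Finset.univ
      (fun W : Finset X =>
        wt q' ((minf H W).filter (fun T => m / 2 < T.card)) ≤ (1/2)^(jlev m + 1))
      (fun W => mu σ W * failP q' σ k (stepState q' (H, m) W))]
    have hdesc : ∑ W ∈ Finset.univ.filter (fun W : Finset X =>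
        wt q' ((minf H W).filter (fun T => m / 2 < T.card)) ≤ (1/2)^(jlev m + 1)),
          mu σ W * failP q' σ k (stepState q' (H, m) W) ≤ TailB k (jlev m - 1) := by
      have hb : ∀ W ∈ Finset.univ.filter (fun W : Finset X =>
          wt q' ((minf H W).filter (fun T => m / 2 < T.card)) ≤ (1/2)^(jlev m + 1)),
          mu σ W * failP q' σ k (stepState q' (H, m) W) ≤ mu σ W * TailB k (jlev m - 1) := by
        intro W hW
        have hc := (Finset.mem_filter.mp hW).2
        have hInv2 := step_inv hq0 hInv W
        have hlev : (stepState q' (H, m) W).2 = m / 2 := by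
          unfold stepState
          dsimp only
          rw [if_pos hc]
        refine mul_le_mul_of_nonneg_left ?_ (mu_nonneg hσ0.le hσ1 W)
        calc failP q' σ k (stepState q' (H, m) W)
            ≤ TailB k (jlev (stepState q' (H, m) W).2) := ih _ hInv2
          _ = TailB k (jlev m - 1) := by rw [hlev, jlev_half hm1]
      calc ∑ W ∈ Finset.univ.filter (fun W : Finset X =>
            wt q' ((minf H W).filter (fun T => m / 2 < T.card)) ≤ (1/2)^(jlev m + 1)),
            mu σ W * failP q' σ k (stepState q' (H, m) W)
          ≤ ∑ W ∈ Finset.univ.filter (fun W : Finset X =>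
            wt q' ((minf H W).filter (fun T => m / 2 < T.card)) ≤ (1/2)^(jlev m + 1)),
            mu σ W * TailB k (jlev m - 1) := Finset.sum_le_sum hb
        _ = (∑ W ∈ Finset.univ.filter (fun W : Finset X =>
            wt q' ((minf H W).filter (fun T => m / 2 < T.card)) ≤ (1/2)^(jlev m + 1)),
            mu σ W) * TailB k (jlev m - 1) := by rw [← Finset.sum_mul]
        _ ≤ 1 * TailB k (jlev m - 1) := by
            refine mul_le_mul_of_nonneg_right ?_ (TailB_nonneg _ _)
            calc ∑ W ∈ Finset.univ.filter (fun W : Finset X =>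
                wt q' ((minf H W).filter (fun T => m / 2 < T.card)) ≤ (1/2)^(jlev m + 1)),
                mu σ W
                ≤ ∑ W : Finset X, mu σ W := Finset.sum_le_sum_of_subset_of_nonneg
                  (Finset.filter_subset _ _) (fun W _ _ => mu_nonneg hσ0.le hσ1 W)
              _ = 1 := sum_mu_univ σ
        _ = TailB k (jlev m - 1) := one_mul _
    have hstay : ∑ W ∈ Finset.univ.filter (fun W : Finset X =>
        ¬ wt q' ((minf H W).filter (fun T => m / 2 < T.card)) ≤ (1/2)^(jlev m + 1)),
          mu σ W * failP q' σ k (stepState q' (H, m) W) ≤ (1/4) * TailB k (jlev m) := by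
      have hb : ∀ W ∈ Finset.univ.filter (fun W : Finset X =>
          ¬ wt q' ((minf H W).filter (fun T => m / 2 < T.card)) ≤ (1/2)^(jlev m + 1)),
          mu σ W * failP q' σ k (stepState q' (H, m) W) ≤ mu σ W * TailB k (jlev m) := by
        intro W hW
        have hc := (Finset.mem_filter.mp hW).2
        have hInv2 := step_inv hq0 hInv W
        have hlev : (stepState q' (H, m) W).2 = m := by
          unfold stepState
          dsimp only
          rw [if_neg hc]
        refine mul_le_mul_of_nonneg_left ?_ (mu_nonneg hσ0.le hσ1 W)
        calc failP q' σ k (stepState q' (H, m) W)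
            ≤ TailB k (jlev (stepState q' (H, m) W).2) := ih _ hInv2
          _ = TailB k (jlev m) := by rw [hlev]
      calc ∑ W ∈ Finset.univ.filter (fun W : Finset X =>
          ¬ wt q' ((minf H W).filter (fun T => m / 2 < T.card)) ≤ (1/2)^(jlev m + 1)),
            mu σ W * failP q' σ k (stepState q' (H, m) W)
          ≤ ∑ W ∈ Finset.univ.filter (fun W : Finset X =>
            ¬ wt q' ((minf H W).filter (fun T => m / 2 < T.card)) ≤ (1/2)^(jlev m + 1)),
            mu σ W * TailB k (jlev m) := Finset.sum_le_sum hb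
        _ = (∑ W ∈ Finset.univ.filter (fun W : Finset X =>
            ¬ wt q' ((minf H W).filter (fun T => m / 2 < T.card)) ≤ (1/2)^(jlev m + 1)),
            mu σ W) * TailB k (jlev m) := by rw [← Finset.sum_mul]
        _ ≤ (1/4) * TailB k (jlev m) := by
            refine mul_le_mul_of_nonneg_right ?_ (TailB_nonneg _ _)
            exact stay_prob hq0 hInv.1 hm1 hσ0 hσ1 hx
    have hpascal := TailB_succ k (jlev m - 1)
    have he : jlev m - 1 + 1 = jlev m := by omega
    rw [he] at hpascal
    linarith

/-! ### Part 7: transfer to the biased measure -/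

lemma step_fst_sub (q' : ℝ) (s : Finset (Finset X) × ℕ) (W : Finset X) :
    (stepState q' s W).1 ⊆ minf s.1 W := by
  unfold stepState
  split
  · exact Finset.filter_subset _ _
  · exact Finset.Subset.refl _

lemma upClos_step_sub (q' : ℝ) (s : Finset (Finset X) × ℕ) (W V : Finset X)
    (hV : V ∈ upClos (stepState q' s W).1) : W ∪ V ∈ upClos s.1 := by
  unfold upClos at *
  rw [Finset.mem_filter] at *
  obtain ⟨-, T, hT, hTV⟩ := hV
  have hT2 : T ∈ minf s.1 W := step_fst_sub q' s W hT
  obtain ⟨S, hS, rfl⟩ := minf_frag hT2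
  refine ⟨Finset.mem_univ _, S, hS, ?_⟩
  intro a ha
  by_cases h : a ∈ W
  · exact Finset.mem_union_left _ h
  · exact Finset.mem_union_right _ (hTV (Finset.mem_sdiff.mpr ⟨ha, h⟩))

lemma transfer {q' σ : ℝ} (hq0 : 0 ≤ q') (hσ0 : 0 ≤ σ) (hσ1 : σ ≤ 1) :
    ∀ (k : ℕ) (s : Finset (Finset X) × ℕ), Inv q' s →
      1 - failP q' σ k s ≤ muF (1 - (1 - σ)^k) (upClos s.1) := by
  intro k
  induction k with
  | zero =>
    intro s hInv
    obtain ⟨H, m⟩ := s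
    have hpi : (1:ℝ) - (1 - σ)^0 = 0 := by norm_num
    rw [hpi]
    by_cases h : m = 0
    · subst h
      have hH : H = {∅} := inv_zero hInv
      show (1:ℝ) - (if (0:ℕ) = 0 then (0:ℝ) else 1) ≤ _
      rw [if_pos rfl]
      have huniv : upClos ((({∅} : Finset (Finset X)), 0).1) = Finset.univ := by
        apply Finset.eq_univ_iff_forall.mpr
        intro T
        unfold upClos
        rw [Finset.mem_filter]
        exact ⟨Finset.mem_univ _, ∅, Finset.mem_singleton_self ∅, Finset.empty_subset T⟩
      rw [hH, huniv]
      have h1 : muF 0 (Finset.univ : Finset (Finset X)) = 1 := sum_mu_univ 0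
      rw [h1]
      norm_num
    · show (1:ℝ) - (if m = 0 then (0:ℝ) else 1) ≤ _
      rw [if_neg h]
      have := muF_nonneg (le_refl (0:ℝ)) (by norm_num) (upClos ((H, m).1))
      linarith
  | succ k ih =>
    intro s hInv
    have hπ0 : (0:ℝ) ≤ 1 - (1 - σ)^k := by
      have := pow_le_one₀ (n := k) (by linarith : (0:ℝ) ≤ 1 - σ) (by linarith : 1 - σ ≤ 1)
      linarith
    have hπ1 : 1 - (1 - σ)^k ≤ 1 := by
      have := pow_nonneg (by linarith : (0:ℝ) ≤ 1 - σ) k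
      linarith
    show (1:ℝ) - (∑ W : Finset X, mu σ W * failP q' σ k (stepState q' s W))
        ≤ muF (1 - (1 - σ)^(k+1)) (upClos s.1)
    have hstep1 : (1:ℝ) - (∑ W : Finset X, mu σ W * failP q' σ k (stepState q' s W))
        = ∑ W : Finset X, mu σ W * (1 - failP q' σ k (stepState q' s W)) := by
      have e : ∀ W : Finset X, mu σ W * (1 - failP q' σ k (stepState q' s W))
          = mu σ W - mu σ W * failP q' σ k (stepState q' s W) := fun W => by ring
      rw [Finset.sum_congr rfl (fun W _ => e W), Finset.sum_sub_distrib, sum_mu_univ]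
    rw [hstep1]
    have hstep2 : ∑ W : Finset X, mu σ W * (1 - failP q' σ k (stepState q' s W))
        ≤ ∑ W : Finset X, mu σ W *
            (∑ V : Finset X, mu (1 - (1-σ)^k) V * (if W ∪ V ∈ upClos s.1 then 1 else 0)) := by
      refine Finset.sum_le_sum fun W _ => ?_
      refine mul_le_mul_of_nonneg_left ?_ (mu_nonneg hσ0 hσ1 W)
      calc 1 - failP q' σ k (stepState q' s W)
          ≤ muF (1 - (1-σ)^k) (upClos (stepState q' s W).1) := ih _ (step_inv hq0 hInv W)
        _ = ∑ V ∈ upClos (stepState q' s W).1, mu (1 - (1-σ)^k) V := rfl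
        _ = ∑ V : Finset X, (if V ∈ upClos (stepState q' s W).1 then mu (1 - (1-σ)^k) V else 0) := by
            rw [← Finset.sum_filter]
            congr 1
            ext V
            simp
        _ ≤ ∑ V : Finset X, mu (1 - (1-σ)^k) V * (if W ∪ V ∈ upClos s.1 then 1 else 0) := by
            refine Finset.sum_le_sum fun V _ => ?_
            by_cases hV : V ∈ upClos (stepState q' s W).1
            · rw [if_pos hV, if_pos (upClos_step_sub q' s W V hV), mul_one]
            · rw [if_neg hV]
              refine mul_nonneg (mu_nonneg hπ0 hπ1 V) ?_
              split <;> norm_num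
    refine hstep2.trans ?_
    have hstep3 : ∑ W : Finset X, mu σ W *
        (∑ V : Finset X, mu (1 - (1-σ)^k) V * (if W ∪ V ∈ upClos s.1 then 1 else 0))
        = ∑ W : Finset X, ∑ V : Finset X,
            mu σ W * mu (1 - (1-σ)^k) V * (if W ∪ V ∈ upClos s.1 then 1 else 0) := by
      refine Finset.sum_congr rfl fun W _ => ?_
      rw [Finset.mul_sum]
      refine Finset.sum_congr rfl fun V _ => by ring
    rw [hstep3, union_measure (upClos s.1) σ (1 - (1-σ)^k)]
    have e : σ + (1 - (1-σ)^k) - σ * (1 - (1-σ)^k) = 1 - (1-σ)^(k+1) := by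
      rw [pow_succ]
      ring
    rw [e]

/-! ### Part 8: assembly -/

lemma empty_not_mem {F : Finset (Finset X)} (hup : IsUpperFam F) (hnt : F ≠ Finset.univ) :
    (∅ : Finset X) ∉ F := by
  intro h
  exact hnt (Finset.eq_univ_iff_forall.mpr fun T => hup ∅ h T (Finset.empty_subset T))

lemma qThr_lt_imp_notPSmall {F : Finset (Finset X)} {q' : ℝ} (h1 : qThr F < q')
    (h2 : 0 ≤ q') (h3 : q' ≤ 1) : ¬ PSmall q' F := by
  intro hP
  have hmem : q' ∈ {p : ℝ | p ∈ Set.Icc (0:ℝ) 1 ∧ PSmall p F} := ⟨⟨h2, h3⟩, hP⟩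
  have hb : BddAbove {p : ℝ | p ∈ Set.Icc (0:ℝ) 1 ∧ PSmall p F} :=
    ⟨1, fun y hy => hy.1.2⟩
  have := le_csSup hb hmem
  rw [qThr] at h1
  linarith

lemma le_qThr_of_PSmall {F : Finset (Finset X)} {q₀ : ℝ} (h0 : 0 ≤ q₀) (h1 : q₀ ≤ 1)
    (hP : PSmall q₀ F) : q₀ ≤ qThr F :=
  le_csSup ⟨1, fun y hy => hy.1.2⟩ ⟨⟨h0, h1⟩, hP⟩

lemma one_le_ell0 {F : Finset (Finset X)} (hup : IsUpperFam F) (hne : F ≠ ∅)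
    (hnt : F ≠ Finset.univ) : 1 ≤ ell0 F := by
  obtain ⟨S, hS⟩ := Finset.nonempty_iff_ne_empty.mpr hne
  obtain ⟨T, hT, -⟩ := exists_minimal_subset hS
  have hTF : T ∈ F := Finset.mem_of_mem_filter T hT
  have hTne : T ≠ ∅ := fun h => empty_not_mem hup hnt (h ▸ hTF)
  have h1 : 1 ≤ T.card := Finset.card_pos.mpr (Finset.nonempty_iff_ne_empty.mpr hTne)
  exact le_trans h1 (Finset.le_sup hT)

lemma natlog_le_logb (ℓ : ℕ) (hl : 1 ≤ ℓ) : (Nat.log 2 ℓ : ℝ) ≤ Real.logb 2 (ℓ : ℝ) := by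
  have h1 : (2:ℕ) ^ Nat.log 2 ℓ ≤ ℓ := Nat.pow_log_le_self 2 (by omega)
  have h2 : ((2:ℝ)) ^ Nat.log 2 ℓ ≤ (ℓ : ℝ) := by exact_mod_cast h1
  have h3 := Real.logb_le_logb_of_le (b := 2) (by norm_num) (by positivity) h2
  calc (Nat.log 2 ℓ : ℝ) = Real.logb 2 ((2:ℝ) ^ Nat.log 2 ℓ) := by
        rw [Real.logb_pow, Real.logb_self_eq_one (by norm_num), mul_one]
    _ ≤ Real.logb 2 (ℓ : ℝ) := h3

lemma upClos_minimals_sub {F : Finset (Finset X)} (hup : IsUpperFam F) :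
    upClos (minimalsF F) ⊆ F := by
  intro T hT
  unfold upClos at hT
  rw [Finset.mem_filter] at hT
  obtain ⟨-, S, hS, hST⟩ := hT
  exact hup S (Finset.mem_of_mem_filter S hS) T hST

lemma main_case {F : Finset (Finset X)} (hup : IsUpperFam F) (hne : F ≠ ∅)
    (hnt : F ≠ Finset.univ) {ε p : ℝ} (hε : ε ∈ Set.Ioo (0:ℝ) 1) (hp : p ∈ Set.Ioc (0:ℝ) 1)
    (hl2 : 2 ≤ ell0 F)
    (hbig : p > 48 * qThr F * Real.logb 2 ((ell0 F : ℝ) / ε)) : muF p F > 1 - ε := by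
  obtain ⟨hε0, hε1⟩ := hε
  obtain ⟨hp0, hp1⟩ := hp
  set ℓ := ell0 F with hℓ
  set Λ := Real.logb 2 ((ℓ:ℝ)/ε) with hΛdef
  have hℓ2 : (2:ℝ) ≤ (ℓ:ℝ) := by exact_mod_cast hl2
  have hΛ1 : 1 < Λ := by
    have h2 : (2:ℝ) < (ℓ:ℝ)/ε := by
      have h3 : (ℓ:ℝ) < (ℓ:ℝ)/ε := by
        rw [lt_div_iff₀ hε0]
        nlinarith
      linarith
    calc (1:ℝ) = Real.logb 2 2 := (Real.logb_self_eq_one (by norm_num)).symm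
      _ < Λ := Real.logb_lt_logb (by norm_num) (by norm_num) h2
  have hΛ0 : 0 < Λ := by linarith
  set q' := p / (48*Λ) with hq'def
  have hq'0 : 0 < q' := div_pos hp0 (by positivity)
  have hq'1 : q' ≤ 1 := by
    rw [hq'def, div_le_one (by positivity)]
    nlinarith
  have hqT : qThr F < q' := by
    rw [hq'def, lt_div_iff₀ (by positivity)]
    calc qThr F * (48*Λ) = 48 * qThr F * Λ := by ring
      _ < p := hbig
  have hnSmall : ¬ PSmall q' F := qThr_lt_imp_notPSmall hqT hq'0.le hq'1
  set N : ℕ := ⌈(2*Λ)⌉₊ with hN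
  have hN2 : 2*Λ ≤ (N:ℝ) := Nat.le_ceil _
  have hNlt : (N:ℝ) < 2*Λ + 1 := Nat.ceil_lt_add_one (by positivity)
  have hN3 : (N:ℝ) ≤ 3*Λ := by linarith
  have hN1R : (1:ℝ) ≤ (N:ℝ) := by linarith
  have hN1 : 1 ≤ N := by exact_mod_cast hN1R
  have hNpos : (0:ℝ) < (N:ℝ) := by linarith
  set σ := p / N with hσdef
  have hσ0 : 0 < σ := div_pos hp0 hNpos
  have hσ1 : σ ≤ 1 := by
    rw [hσdef, div_le_one hNpos]
    linarith
  have hx : q' * ((1-σ)/σ) ≤ 1/16 := by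
    have h1 : (1-σ)/σ ≤ 1/σ := (div_le_div_iff_of_pos_right hσ0).mpr (by linarith)
    have h3 : q' * (1/σ) = (N:ℝ)/(48*Λ) := by
      have hp0' : p ≠ 0 := ne_of_gt hp0
      have hΛ0' : Λ ≠ 0 := ne_of_gt hΛ0
      have hN0' : (N:ℝ) ≠ 0 := ne_of_gt hNpos
      rw [hq'def, hσdef]
      field_simp
    have h4 : (N:ℝ)/(48*Λ) ≤ 1/16 := by
      rw [div_le_div_iff₀ (by positivity) (by norm_num)]
      nlinarith
    calc q' * ((1-σ)/σ) ≤ q' * (1/σ) := mul_le_mul_of_nonneg_left h1 hq'0.le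
      _ = (N:ℝ)/(48*Λ) := h3
      _ ≤ 1/16 := h4
  set H₀ := minimalsF F with hH0
  have hInv : Inv q' (H₀, ℓ) := by
    constructor
    · intro S hS
      exact Finset.le_sup hS
    · intro G hG
      have hGF : IsCover G F := cover_of_minimals hG
      by_contra hle
      push_neg at hle
      exact hnSmall ⟨G, hGF, le_trans hle (clev_le_half ℓ)⟩
  have hfail := failP_le_TailB hq'0.le hσ0 hσ1 hx N (H₀, ℓ) hInv
  set D := jlev ℓ with hD
  -- numeric Tail bound
  set lam := Real.logb 2 (ℓ:ℝ) with hlam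
  set e := -Real.logb 2 ε with he
  have he0 : 0 < e := by
    rw [he]
    have := Real.logb_neg (by norm_num : (1:ℝ) < 2) hε0 hε1
    linarith
  have hΛsplit : Λ = lam + e := by
    rw [hΛdef, hlam, he, Real.logb_div (by positivity) (by positivity)]
    ring
  have hDlam : (D:ℝ) - 1 ≤ lam := by
    have h1 : D = Nat.log 2 ℓ + 1 := by
      rw [hD]
      unfold jlev
      rw [if_neg (by omega)]
    rw [h1]
    push_cast
    have := natlog_le_logb ℓ (by omega)
    rw [← hlam] at this
    linarith
  have hDN : D ≤ N := by
    have h1 : (D:ℝ) ≤ lam + 1 := by linarith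
    have h2 : lam ≤ Λ := by nlinarith [hΛsplit, he0]
    have h3 : (D:ℝ) ≤ Λ + 1 := by linarith
    have h4 : (D:ℝ) ≤ (N:ℝ) := by nlinarith
    exact_mod_cast h4
  have hTail : TailB N D < ε := by
    have hterm : ∀ i ∈ Finset.range D, (N.choose i : ℝ) * (1/4)^(N-i)
        ≤ (N.choose i : ℝ) * (1/4)^(N-D+1) := by
      intro i hi
      rw [Finset.mem_range] at hi
      refine mul_le_mul_of_nonneg_left ?_ (by positivity)
      apply pow_le_pow_of_le_one (by norm_num) (by norm_num)
      omega
    have hsum1 : TailB N D ≤ (∑ i ∈ Finset.range D, (N.choose i : ℝ)) * (1/4)^(N-D+1) := by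
      rw [Finset.sum_mul]
      exact Finset.sum_le_sum hterm
    have hch : (∑ i ∈ Finset.range D, (N.choose i : ℝ)) ≤ 2^N := by
      have h1 : ∑ i ∈ Finset.range D, N.choose i ≤ ∑ i ∈ Finset.range (N+1), N.choose i :=
        Finset.sum_le_sum_of_subset (Finset.range_subset_range.mpr (by omega))
      rw [Nat.sum_range_choose] at h1
      exact_mod_cast h1
    have hsum2 : TailB N D ≤ (2:ℝ)^N * (1/4)^(N-D+1) := by
      have hpow : (0:ℝ) ≤ (1/4:ℝ)^(N-D+1) := by positivity
      exact hsum1.trans (mul_le_mul_of_nonneg_right hch hpow)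
    refine lt_of_le_of_lt hsum2 ?_
    -- 2^N (1/4)^(N-D+1) < ε via rpow
    have hcast : ((N - D + 1 : ℕ) : ℝ) = (N:ℝ) - D + 1 := by
      push_cast [Nat.cast_sub hDN]
      ring
    have hlhs : (2:ℝ)^N * (1/4)^(N-D+1) = (2:ℝ) ^ ((N:ℝ) - 2*((N:ℝ) - D + 1)) := by
      have h4 : ((1:ℝ)/4) = (2:ℝ)^(-2 : ℝ) := by
        rw [Real.rpow_neg (by norm_num), Real.rpow_two]
        norm_num
      rw [h4]
      rw [← Real.rpow_natCast 2 N, ← Real.rpow_natCast ((2:ℝ)^(-2:ℝ)) (N-D+1),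
        ← Real.rpow_mul (by norm_num), ← Real.rpow_add (by norm_num)]
      congr 1
      rw [hcast]
      ring
    rw [hlhs]
    have hrhs : ε = (2:ℝ) ^ (Real.logb 2 ε) := (Real.rpow_logb (by norm_num) (by norm_num) hε0).symm
    rw [hrhs]
    apply Real.rpow_lt_rpow_left_iff (by norm_num : (1:ℝ) < 2) |>.mpr
    -- (N:ℝ) - 2(N - D + 1) = 2D - N - 2 ≤ 2lam - 2Λ = -2e < -e = logb 2 ε
    have hlogeps : Real.logb 2 ε = -e := by rw [he]; ring
    rw [hlogeps]
    nlinarith [hN2, hDlam, hΛsplit, he0]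
  have htr := transfer hq'0.le hσ0.le hσ1 N (H₀, ℓ) hInv
  have hsub : upClos H₀ ⊆ F := upClos_minimals_sub hup
  set π := 1 - (1-σ)^N with hπ
  have hπ0 : 0 ≤ π := by
    rw [hπ]
    have := pow_le_one₀ (n := N) (by linarith : (0:ℝ) ≤ 1-σ) (by linarith)
    linarith
  have hπ1 : π ≤ 1 := by
    rw [hπ]
    have := pow_nonneg (by linarith : (0:ℝ) ≤ 1-σ) N
    linarith
  have hπp : π ≤ p := by
    have hb := one_add_mul_le_pow (a := -σ) (by linarith) N
    have hNσ : (N:ℝ)*σ = p := by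
      rw [hσdef]
      field_simp
    rw [hπ]
    have h5 : 1 + (N:ℝ) * (-σ) ≤ (1 - σ)^N := by
      rw [show (1:ℝ) - σ = 1 + -σ from by ring]
      exact hb
    nlinarith
  have hmono1 : muF π F ≤ muF p F := muF_mono_p hup hπ0 hπp hp1
  have hmono2 : muF π (upClos H₀) ≤ muF π F := muF_mono_subset hπ0 hπ1 hsub
  have hfin : 1 - TailB N D ≤ muF π (upClos H₀) := by
    calc 1 - TailB N D ≤ 1 - failP q' σ N (H₀, ℓ) := by linarith [hfail]
      _ ≤ muF π (upClos (H₀, ℓ).1) := htr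
      _ = muF π (upClos H₀) := rfl
  linarith

lemma avoid_measure (B : Finset X) {p : ℝ} :
    ∑ W ∈ Finset.univ.filter (fun W : Finset X => Disjoint W B), mu p W = (1-p)^B.card := by
  have hset : Finset.univ.filter (fun W : Finset X => Disjoint W B)
      = (Finset.univ \ B).powerset := by
    ext W
    rw [Finset.mem_filter, Finset.mem_powerset, Finset.subset_sdiff]
    constructor
    · rintro ⟨-, h⟩; exact ⟨Finset.subset_univ W, h⟩
    · rintro ⟨-, h⟩; exact ⟨Finset.mem_univ W, h⟩
  rw [hset]
  have hcard : (Finset.univ \ B).card = Fintype.card X - B.card := by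
    rw [Finset.card_sdiff_of_subset (Finset.subset_univ B), Finset.card_univ]
  have hBn : B.card ≤ Fintype.card X := by
    rw [← Finset.card_univ]
    exact Finset.card_le_card (Finset.subset_univ B)
  have step : ∀ W ∈ (Finset.univ \ B).powerset,
      mu p W = (1-p)^B.card * (p ^ W.card * (1-p) ^ ((Finset.univ \ B).card - W.card)) := by
    intro W hW
    rw [Finset.mem_powerset] at hW
    have hWc : W.card ≤ (Finset.univ \ B).card := Finset.card_le_card hW
    unfold mu
    have e1 : Fintype.card X - W.card = ((Finset.univ \ B).card - W.card) + B.card := by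
      rw [hcard] at hWc ⊢
      omega
    rw [e1, pow_add]
    ring
  rw [Finset.sum_congr rfl step, ← Finset.mul_sum, sum_pow_card]
  have : p + (1 - p) = 1 := by ring
  rw [this, one_pow, mul_one]

lemma singleton_case {F : Finset (Finset X)} (hup : IsUpperFam F) (hne : F ≠ ∅)
    (hnt : F ≠ Finset.univ) {ε p : ℝ} (hε : ε ∈ Set.Ioo (0:ℝ) 1) (hp : p ∈ Set.Ioc (0:ℝ) 1)
    (hl1 : ell0 F = 1)
    (hbig : p > 48 * qThr F * Real.logb 2 ((ell0 F : ℝ) / ε)) : muF p F > 1 - ε := by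
  obtain ⟨hε0, hε1⟩ := hε
  obtain ⟨hp0, hp1⟩ := hp
  set A := minimalsF F with hA
  have hAne : A.Nonempty := by
    obtain ⟨S, hS⟩ := Finset.nonempty_iff_ne_empty.mpr hne
    obtain ⟨T, hT, -⟩ := exists_minimal_subset hS
    exact ⟨T, hT⟩
  have hcard1 : ∀ T ∈ A, T.card = 1 := by
    intro T hT
    have h1 : T.card ≤ 1 := hl1 ▸ Finset.le_sup hT
    have hTF : T ∈ F := Finset.mem_of_mem_filter T hT
    have hTne : T ≠ ∅ := fun h => empty_not_mem hup hnt (h ▸ hTF)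
    have h2 : 1 ≤ T.card := Finset.card_pos.mpr (Finset.nonempty_iff_ne_empty.mpr hTne)
    omega
  set k := A.card with hk
  have hk1 : 1 ≤ k := Finset.card_pos.mpr hAne
  have hkR : (1:ℝ) ≤ (k:ℝ) := by exact_mod_cast hk1
  have hkpos : (0:ℝ) < (k:ℝ) := by linarith
  -- qThr ≥ 1/(2k)
  have hPS : PSmall (1/(2*(k:ℝ))) F := by
    refine ⟨A, fun S hS => ?_, ?_⟩
    · obtain ⟨T, hT, hTS⟩ := exists_minimal_subset hS
      exact ⟨T, hT, hTS⟩
    · have : ∀ T ∈ A, (1/(2*(k:ℝ))) ^ T.card = 1/(2*(k:ℝ)) := by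
        intro T hT
        rw [hcard1 T hT, pow_one]
      rw [Finset.sum_congr rfl this, Finset.sum_const, ← hk, nsmul_eq_mul]
      rw [mul_one_div]
      rw [div_le_div_iff₀ (by positivity) (by norm_num)]
      ring_nf
      nlinarith
  have hqT : 1/(2*(k:ℝ)) ≤ qThr F := by
    apply le_qThr_of_PSmall (by positivity) ?_ hPS
    rw [div_le_one (by positivity)]
    linarith
  -- derive pk > 24 Λ'
  set Λ' := Real.logb 2 (1 / ε) with hΛ'
  have hΛ'0 : 0 < Λ' := by
    rw [hΛ']
    apply Real.logb_pos (by norm_num)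
    rw [lt_div_iff₀ hε0]
    linarith
  have hbig2 : p > 24 * Λ' / k := by
    have h0 : (ell0 F : ℝ) = 1 := by rw [hl1]; norm_num
    rw [h0] at hbig
    rw [← hΛ'] at hbig
    have h1 : 48 * (1/(2*(k:ℝ))) * Λ' ≤ 48 * qThr F * Λ' := by
      apply mul_le_mul_of_nonneg_right _ hΛ'0.le
      nlinarith
    have h2 : 48 * (1/(2*(k:ℝ))) * Λ' = 24 * Λ' / k := by
      field_simp
      ring
    linarith
  have hpk : 24 * Λ' < p * k := by
    rw [gt_iff_lt, div_lt_iff₀ hkpos] at hbig2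
    linarith
  -- measure bound
  set B := A.biUnion id with hB
  have hdisj : ∀ T ∈ A, ∀ T' ∈ A, T ≠ T' → Disjoint (id T) (id T') := by
    intro T hT T' hT' hne'
    simp only [id_eq]
    rw [Finset.disjoint_left]
    intro x hxT hxT'
    obtain ⟨a, ha⟩ := Finset.card_eq_one.mp (hcard1 T hT)
    obtain ⟨b, hb⟩ := Finset.card_eq_one.mp (hcard1 T' hT')
    apply hne'
    rw [ha, hb]
    rw [ha, Finset.mem_singleton] at hxT
    rw [hb, Finset.mem_singleton] at hxT'
    rw [← hxT, ← hxT']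
  have hBcard : B.card = k := by
    rw [hB, Finset.card_biUnion hdisj]
    calc ∑ T ∈ A, (id T).card = ∑ T ∈ A, 1 :=
          Finset.sum_congr rfl (fun T hT => hcard1 T hT)
      _ = k := by rw [Finset.sum_const, smul_eq_mul, mul_one]
  have hcompl : muF p F + ∑ W ∈ Finset.univ \ F, mu p W = 1 := by
    have h := Finset.sum_sdiff (f := mu p) (Finset.subset_univ F)
    have h2 := sum_mu_univ (X := X) p
    unfold muF
    linarith
  have hsubD : Finset.univ \ F ⊆ Finset.univ.filter (fun W : Finset X => Disjoint W B) := by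
    intro W hW
    rw [Finset.mem_sdiff] at hW
    rw [Finset.mem_filter]
    refine ⟨Finset.mem_univ W, ?_⟩
    rw [Finset.disjoint_left]
    intro x hxW hxB
    rw [hB, Finset.mem_biUnion] at hxB
    obtain ⟨T, hT, hxT⟩ := hxB
    obtain ⟨a, ha⟩ := Finset.card_eq_one.mp (hcard1 T hT)
    simp only [id_eq] at hxT
    rw [ha, Finset.mem_singleton] at hxT
    have hTW : T ⊆ W := by
      rw [ha, ← hxT, Finset.singleton_subset_iff]
      exact hxW
    exact hW.2 (hup T (Finset.mem_of_mem_filter T hT) W hTW)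
  have hbound : ∑ W ∈ Finset.univ \ F, mu p W ≤ (1-p)^k := by
    rw [← hBcard, ← avoid_measure B]
    exact Finset.sum_le_sum_of_subset_of_nonneg hsubD
      (fun W _ _ => mu_nonneg hp0.le hp1 W)
  have hμ : 1 - (1-p)^k ≤ muF p F := by linarith
  -- (1-p)^k < ε
  have hfinal : (1-p)^k < ε := by
    rcases eq_or_lt_of_le hp1 with hp1' | hp1'
    · rw [hp1']
      norm_num
      rw [zero_pow (by omega)]
      exact hε0
    · have h1 : (1-p)^k ≤ (Real.exp (-p))^k := by
        apply pow_le_pow_left₀ (by linarith)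
        have := Real.add_one_le_exp (-p)
        linarith
      have h2 : (Real.exp (-p))^k = Real.exp (-(p*k)) := by
        rw [← Real.exp_nat_mul]
        congr 1
        ring
      have h3 : Real.exp (-(p*k)) < ε := by
        rw [show ε = Real.exp (Real.log ε) from (Real.exp_log hε0).symm]
        apply Real.exp_lt_exp.mpr
        -- -(pk) < log ε ⟺ pk > -log ε
        have hlogε : Real.log ε < 0 := Real.log_neg hε0 hε1
        have hΛ'eq : Λ' = -Real.log ε / Real.log 2 := by
          rw [hΛ', Real.logb, Real.log_div (by norm_num) (by positivity)]
          norm_num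
        have hlog2pos : 0 < Real.log 2 := Real.log_pos (by norm_num)
        have hlog2le : Real.log 2 ≤ 1 := by
          have := Real.log_le_sub_one_of_pos (by norm_num : (0:ℝ) < 2)
          linarith
        have h4 : -Real.log ε ≤ Λ' := by
          rw [hΛ'eq]
          rw [le_div_iff₀ hlog2pos]
          nlinarith
        nlinarith
      calc (1-p)^k ≤ (Real.exp (-p))^k := h1
        _ = Real.exp (-(p*k)) := h2
        _ < ε := h3
  linarith

end BellAux

/-- **Bell's optimal ε-dependent Park–Pham theorem.** For every nonempty finite set `X`, every
nontrivial upper set `F ⊆ 2^X`, every `ε ∈ (0,1)`, and every `p ∈ (0,1]` with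
`p > 48 · q(F) · log₂(ℓ₀(F)/ε)`, one has `μ_p(F) > 1 - ε`. -/
theorem bell_eps_park_pham (X : Type) [Fintype X] [DecidableEq X] [Nonempty X]
    (F : Finset (Finset X)) (hup : IsUpperFam F) (hne : F ≠ ∅) (hnt : F ≠ Finset.univ)
    (ε : ℝ) (hε : ε ∈ Set.Ioo (0 : ℝ) 1) (p : ℝ) (hp : p ∈ Set.Ioc (0 : ℝ) 1)
    (hbig : p > 48 * qThr F * Real.logb 2 ((ell0 F : ℝ) / ε)) :
    muF p F > 1 - ε := by
  have h1 : 1 ≤ ell0 F := BellAux.one_le_ell0 hup hne hnt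
  rcases eq_or_lt_of_le h1 with h | h
  · exact BellAux.singleton_case hup hne hnt hε hp h.symm hbig
  · exact BellAux.main_case hup hne hnt hε hp (by omega) hbig
end
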